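/- arXiv:2303.16832 — 11 statements merged into one kernel-verified Lean document; each statement's English description precedes it below -/
import Mathlib

section
/- Let D ≥ 2 and j be natural numbers, and let b = 2^ℓ for a natural number ℓ ≥ 1. Let x : ℕ → ℝ satisfy x_i ≥ 0 for all i and x_i = 0 for all i > D, and suppose s_0 ≥ 1. If for every natural number r ≥ 8 one has s_{j+ℓ+r} ≤ 2^{b·2^{r−1}} · s_{j+ℓ}, then S_{2^{−j}} ≤ 1024 · b · 2^j. -/
open Finset Real

/-!
Write `β = 2^{-j}` and `N = 2^{j+ℓ}`, so that `N β = b`. Indices `i ≤ 2^8 N` contribute at most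
`2^8 N · B_β` to `T_β`. The remaining indices are cut into the dyadic blocks `(2^r N, 2^{r+1} N]`,
`r ≥ 8`: there `i e^{-iβ} ≤ 2^{r+1} N e^{-b 2^r}`, and the mass of `x` on the block is at most
`s_{j+ℓ+r} ≤ 2^{b 2^{r-1}} s_{j+ℓ}`, while `B_β ≥ e^{-2b} s_{j+ℓ}` because `iβ ≤ 2b` for `i ≤ 2N`.
The doubly exponential decay `e^{-b 2^r}` beats the growth `2^{b 2^{r-1}}`, so block `r`
contributes at most `2^{-r} N B_β`, and all blocks together at most `2 N B_β`.
-/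

/-- `B_β` of the paper. -/
noncomputable def expMass (x : ℕ → ℝ) (D : ℕ) (β : ℝ) : ℝ :=
  ∑ i ∈ range (D + 1), x i * exp (-(i : ℝ) * β)

/-- `T_β` of the paper. -/
noncomputable def expMoment (x : ℕ → ℝ) (D : ℕ) (β : ℝ) : ℝ :=
  ∑ i ∈ range (D + 1), (i : ℝ) * x i * exp (-(i : ℝ) * β)

theorem sum_Ioc_eq_sum_range_sum_Ioc {M : Type*} [AddCommMonoid M] (f : ℕ → M) {c : ℕ → ℕ}
    (hc : Monotone c) (n : ℕ) :
    ∑ i ∈ Ioc (c 0) (c n), f i = ∑ r ∈ range n, ∑ i ∈ Ioc (c r) (c (r + 1)), f i := by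
  induction n with
  | zero => simp
  | succ n ih =>
    rw [sum_range_succ, ← ih, sum_Ioc_consecutive f (hc n.zero_le) (hc n.le_succ)]

theorem sum_le_sum_range_of_eq_zero_of_lt {g : ℕ → ℝ} {D : ℕ} (hg : ∀ i, 0 ≤ g i)
    (hgD : ∀ i, D < i → g i = 0) (S : Finset ℕ) :
    ∑ i ∈ S, g i ≤ ∑ i ∈ range (D + 1), g i :=
  calc ∑ i ∈ S, g i ≤ ∑ i ∈ S ∪ range (D + 1), g i :=
        sum_le_sum_of_subset_of_nonneg subset_union_left fun i _ _ => hg i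
    _ = ∑ i ∈ range (D + 1), g i :=
        (sum_subset subset_union_right fun i _ hi => hgD i (by simpa using hi)).symm

theorem two_pow_le_exp (n : ℕ) : (2 : ℝ) ^ n ≤ exp n := by
  rw [← exp_one_pow]
  exact pow_le_pow_left₀ zero_le_two exp_one_gt_two.le n

theorem exp_neg_le_inv_two_pow (n : ℕ) : exp (-n) ≤ (1 / 2 : ℝ) ^ n := by
  rw [exp_neg, one_div, inv_pow]
  exact inv_anti₀ (by positivity) (two_pow_le_exp n)

theorem two_mul_add_le_mul_two_pow_pred {b r : ℕ} (hb : 1 ≤ b) (hr : 5 ≤ r) :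
    2 * r + 1 + 2 * b ≤ b * 2 ^ (r - 1) := by
  obtain ⟨k, rfl⟩ : ∃ k, r = k + 5 := ⟨r - 5, by omega⟩
  have hk : 2 * k + 13 ≤ 2 ^ (k + 4) := by
    induction k with
    | zero => norm_num
    | succ k ih => rw [pow_succ]; omega
  rw [show k + 5 - 1 = k + 4 by omega]
  nlinarith

theorem two_pow_mul_exp_neg_le {b r : ℕ} (hb : 1 ≤ b) (hr : 5 ≤ r) :
    (2 : ℝ) ^ (r + 1) * 2 ^ (b * 2 ^ (r - 1)) * exp (-(b * 2 ^ r : ℝ))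
      ≤ exp (-(2 * b : ℝ)) * (1 / 2) ^ r := by
  set m := b * 2 ^ (r - 1)
  have hm : (b : ℝ) * 2 ^ r = 2 * m := by
    obtain ⟨k, rfl⟩ : ∃ k, r = k + 1 := ⟨r - 1, by omega⟩
    simp only [m, Nat.add_sub_cancel]
    push_cast
    ring
  have hlin : (2 * r + 1 + 2 * b : ℝ) ≤ m := by
    exact_mod_cast two_mul_add_le_mul_two_pow_pred hb hr
  calc (2 : ℝ) ^ (r + 1) * 2 ^ m * exp (-(b * 2 ^ r : ℝ))
      ≤ exp (r + 1 : ℕ) * exp m * exp (-(2 * m)) := by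
        rw [hm]
        gcongr <;> exact two_pow_le_exp _
    _ ≤ exp (-(2 * b)) * exp (-r) := by
        simp only [← exp_add]
        exact exp_le_exp.2 (by push_cast; linarith)
    _ ≤ exp (-(2 * b : ℝ)) * (1 / 2) ^ r := by
        gcongr
        exact exp_neg_le_inv_two_pow r

section

variable {x : ℕ → ℝ} {D : ℕ} {β : ℝ}

theorem expMass_nonneg (hx : ∀ i, 0 ≤ x i) : 0 ≤ expMass x D β :=
  sum_nonneg fun i _ => mul_nonneg (hx i) (exp_pos _).le

theorem exp_neg_mul_sum_range_le_expMass (hx : ∀ i, 0 ≤ x i) (hxD : ∀ i, D < i → x i = 0)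
    (hβ : 0 ≤ β) {K : ℕ} {a : ℝ} (ha : K * β ≤ a) :
    exp (-a) * ∑ i ∈ range (K + 1), x i ≤ expMass x D β := by
  rw [mul_sum]
  refine (sum_le_sum fun i hi => ?_).trans
    (sum_le_sum_range_of_eq_zero_of_lt (g := fun i => x i * exp (-(i : ℝ) * β))
      (fun i => mul_nonneg (hx i) (exp_pos _).le) (fun i hi => by simp [hxD i hi]) _)
  have hiK : (i : ℝ) ≤ K := by exact_mod_cast mem_range_succ_iff.1 hi
  rw [mul_comm]
  gcongr (x i) * exp ?_
  · exact hx i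
  · nlinarith

theorem expMoment_le (hx : ∀ i, 0 ≤ x i) (K : ℕ) {M : ℕ} (hM : D ≤ M) :
    expMoment x D β ≤ K * expMass x D β + ∑ i ∈ Ioc K M, (i : ℝ) * x i * exp (-(i : ℝ) * β) := by
  have hterm : ∀ i : ℕ, 0 ≤ (i : ℝ) * x i * exp (-(i : ℝ) * β) := fun i =>
    mul_nonneg (mul_nonneg i.cast_nonneg (hx i)) (exp_pos _).le
  rw [expMoment, ← sum_filter_add_sum_filter_not (range (D + 1)) (· ≤ K)]
  gcongr ?_ + ?_
  · calc ∑ i ∈ (range (D + 1)).filter (· ≤ K), (i : ℝ) * x i * exp (-(i : ℝ) * β)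
        ≤ ∑ i ∈ (range (D + 1)).filter (· ≤ K), (K : ℝ) * (x i * exp (-(i : ℝ) * β)) := by
          refine sum_le_sum fun i hi => ?_
          have hiK : (i : ℝ) ≤ K := by exact_mod_cast (mem_filter.1 hi).2
          rw [← mul_assoc]
          gcongr
          exact hx i
      _ ≤ K * expMass x D β := by
          rw [← mul_sum]
          gcongr
          exact sum_le_sum_of_subset_of_nonneg (filter_subset _ _)
            fun i _ _ => mul_nonneg (hx i) (exp_pos _).le
  · refine sum_le_sum_of_subset_of_nonneg (fun i hi => ?_) fun i _ _ => hterm i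
    simp only [mem_filter, mem_range, not_le] at hi
    exact mem_Ioc.2 ⟨hi.2, by omega⟩

theorem sum_Ioc_mul_exp_le (hx : ∀ i, 0 ≤ x i) (hβ : 0 ≤ β) (m n : ℕ) :
    ∑ i ∈ Ioc m n, (i : ℝ) * x i * exp (-(i : ℝ) * β)
      ≤ n * exp (-(m : ℝ) * β) * ∑ i ∈ range (n + 1), x i := by
  calc ∑ i ∈ Ioc m n, (i : ℝ) * x i * exp (-(i : ℝ) * β)
      ≤ ∑ i ∈ Ioc m n, n * exp (-(m : ℝ) * β) * x i := by
        refine sum_le_sum fun i hi => ?_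
        obtain ⟨hmi, hin⟩ := mem_Ioc.1 hi
        have hmi' : (m : ℝ) ≤ i := by exact_mod_cast hmi.le
        have hin' : (i : ℝ) ≤ n := by exact_mod_cast hin
        calc (i : ℝ) * x i * exp (-(i : ℝ) * β) ≤ n * x i * exp (-(m : ℝ) * β) := by
              gcongr
              · exact mul_nonneg n.cast_nonneg (hx i)
              · exact hx i
          _ = n * exp (-(m : ℝ) * β) * x i := by ring
    _ ≤ n * exp (-(m : ℝ) * β) * ∑ i ∈ range (n + 1), x i := by
        rw [← mul_sum]
        gcongr
        · exact fun i _ _ => hx i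
        · exact fun i hi => mem_range_succ_iff.2 (mem_Ioc.1 hi).2

theorem sum_Ioc_two_pow_le (hx : ∀ i, 0 ≤ x i) {n b R : ℕ} (hβ : (2 : ℝ) ^ n * β = b)
    (hb : 1 ≤ b) (hR : 5 ≤ R)
    (hgrowth : ∑ i ∈ range (2 ^ (n + R + 1) + 1), x i
      ≤ 2 ^ (b * 2 ^ (R - 1)) * ∑ i ∈ range (2 ^ (n + 1) + 1), x i) :
    ∑ i ∈ Ioc (2 ^ (n + R) : ℕ) (2 ^ (n + R + 1)), (i : ℝ) * x i * exp (-(i : ℝ) * β)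
      ≤ 2 ^ n * (1 / 2) ^ R * (exp (-(2 * b : ℝ)) * ∑ i ∈ range (2 ^ (n + 1) + 1), x i) := by
  set s₀ := ∑ i ∈ range (2 ^ (n + 1) + 1), x i
  have hs₀ : 0 ≤ s₀ := sum_nonneg fun i _ => hx i
  have hβ0 : 0 ≤ β := nonneg_of_mul_nonneg_right (hβ ▸ b.cast_nonneg) (by positivity)
  have hscale : ((2 ^ (n + R) : ℕ) : ℝ) * β = b * 2 ^ R := by
    push_cast
    rw [pow_add]
    linear_combination 2 ^ R * hβ
  calc ∑ i ∈ Ioc (2 ^ (n + R) : ℕ) (2 ^ (n + R + 1)), (i : ℝ) * x i * exp (-(i : ℝ) * β)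
      ≤ ((2 ^ (n + R + 1) : ℕ) : ℝ) * exp (-((2 ^ (n + R) : ℕ) : ℝ) * β)
          * ∑ i ∈ range (2 ^ (n + R + 1) + 1), x i := sum_Ioc_mul_exp_le hx hβ0 _ _
    _ ≤ ((2 ^ (n + R + 1) : ℕ) : ℝ) * exp (-(b * 2 ^ R : ℝ)) * (2 ^ (b * 2 ^ (R - 1)) * s₀) := by
        rw [neg_mul, hscale]
        gcongr
    _ = 2 ^ n * ((2 : ℝ) ^ (R + 1) * 2 ^ (b * 2 ^ (R - 1)) * exp (-(b * 2 ^ R : ℝ))) * s₀ := by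
        push_cast
        ring
    _ ≤ 2 ^ n * (exp (-(2 * b : ℝ)) * (1 / 2) ^ R) * s₀ := by
        gcongr 2 ^ n * ?_ * s₀
        exact two_pow_mul_exp_neg_le hb hR
    _ = 2 ^ n * (1 / 2) ^ R * (exp (-(2 * b : ℝ)) * s₀) := by ring

theorem expMoment_le_of_growth (hx : ∀ i, 0 ≤ x i) (hxD : ∀ i, D < i → x i = 0)
    {n b r₀ : ℕ} (hβ : (2 : ℝ) ^ n * β = b) (hb : 1 ≤ b) (hr₀ : 5 ≤ r₀)
    (hgrowth : ∀ r, r₀ ≤ r → ∑ i ∈ range (2 ^ (n + r + 1) + 1), x i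
      ≤ 2 ^ (b * 2 ^ (r - 1)) * ∑ i ∈ range (2 ^ (n + 1) + 1), x i) :
    expMoment x D β ≤ (2 ^ r₀ + 2) * 2 ^ n * expMass x D β := by
  set s₀ := ∑ i ∈ range (2 ^ (n + 1) + 1), x i
  set f : ℕ → ℝ := fun i => (i : ℝ) * x i * exp (-(i : ℝ) * β)
  have hβ0 : 0 ≤ β := nonneg_of_mul_nonneg_right (hβ ▸ b.cast_nonneg) (by positivity)
  have hmass : exp (-(2 * b : ℝ)) * s₀ ≤ expMass x D β := by
    refine exp_neg_mul_sum_range_le_expMass hx hxD hβ0 (le_of_eq ?_)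
    push_cast
    rw [pow_succ]
    linear_combination 2 * hβ
  have hDM : D ≤ 2 ^ (n + r₀ + D) :=
    D.lt_two_pow_self.le.trans (Nat.pow_le_pow_right two_pos (by omega))
  have hblocks := sum_Ioc_eq_sum_range_sum_Ioc f
    (c := fun r => 2 ^ (n + r₀ + r)) (fun p q hpq => Nat.pow_le_pow_right two_pos (by omega)) D
  simp only [add_zero] at hblocks
  have htail : ∑ i ∈ Ioc (2 ^ (n + r₀) : ℕ) (2 ^ (n + r₀ + D)), f i
      ≤ 2 ^ n * 2 * (exp (-(2 * b : ℝ)) * s₀) := by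
    rw [hblocks]
    calc ∑ r ∈ range D, ∑ i ∈ Ioc (2 ^ (n + r₀ + r) : ℕ) (2 ^ (n + r₀ + (r + 1))), f i
        ≤ ∑ r ∈ range D, 2 ^ n * (1 / 2) ^ r * (exp (-(2 * b : ℝ)) * s₀) := by
          refine sum_le_sum fun r _ => ?_
          have hblock := sum_Ioc_two_pow_le hx hβ hb (R := r₀ + r) (by omega)
            (hgrowth _ (by omega))
          simp only [← add_assoc] at hblock ⊢
          refine hblock.trans ?_
          gcongr 2 ^ n * ?_ * _
          · exact mul_nonneg (exp_pos _).le (sum_nonneg fun i _ => hx i)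
          · exact pow_le_pow_of_le_one (by norm_num) (by norm_num) (by omega)
      _ = 2 ^ n * (∑ r ∈ range D, (1 / 2 : ℝ) ^ r) * (exp (-(2 * b : ℝ)) * s₀) := by
          rw [← sum_mul, ← mul_sum]
      _ ≤ 2 ^ n * 2 * (exp (-(2 * b : ℝ)) * s₀) := by
          gcongr
          · exact mul_nonneg (exp_pos _).le (sum_nonneg fun i _ => hx i)
          · exact sum_geometric_two_le D
  calc expMoment x D β
      ≤ ((2 ^ (n + r₀) : ℕ) : ℝ) * expMass x D β
          + ∑ i ∈ Ioc (2 ^ (n + r₀) : ℕ) (2 ^ (n + r₀ + D)), f i := expMoment_le hx _ hDM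
    _ ≤ 2 ^ (n + r₀) * expMass x D β + 2 ^ n * 2 * expMass x D β := by
        push_cast
        gcongr
        exact htail.trans (by gcongr)
    _ = (2 ^ r₀ + 2) * 2 ^ n * expMass x D β := by ring

end

theorem stmt_0_general (D j ℓ b : ℕ) (hb : b = 2 ^ ℓ)
    (x : ℕ → ℝ) (hx : ∀ i, 0 ≤ x i) (hxD : ∀ i, D < i → x i = 0)
    (s : ℕ → ℝ) (hs : ∀ k, s k = ∑ i ∈ Finset.range (2 ^ (k + 1) + 1), x i)
    (hcond : ∀ r : ℕ, 8 ≤ r →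
      s (j + ℓ + r) ≤ 2 ^ (b * 2 ^ (r - 1)) * s (j + ℓ)) :
    (∑ i ∈ Finset.range (D + 1), (i : ℝ) * x i * Real.exp (-(i : ℝ) * 2 ^ (-(j : ℝ)))) /
      (∑ i ∈ Finset.range (D + 1), x i * Real.exp (-(i : ℝ) * 2 ^ (-(j : ℝ))))
      ≤ 1024 * (b : ℝ) * 2 ^ j := by
  have hβ : (2 : ℝ) ^ (j + ℓ) * 2 ^ (-(j : ℝ)) = b := by
    rw [hb, pow_add, mul_right_comm, ← rpow_natCast 2 j, ← rpow_add two_pos, add_neg_cancel,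
      rpow_zero, one_mul, Nat.cast_pow, Nat.cast_ofNat]
  have hmoment := expMoment_le_of_growth hx hxD hβ (hb ▸ Nat.one_le_two_pow) (r₀ := 8)
    (by norm_num) fun r hr => by simpa only [hs] using hcond r hr
  show expMoment x D _ / expMass x D _ ≤ _
  refine div_le_of_le_mul₀ (expMass_nonneg hx) (by positivity) (hmoment.trans ?_)
  refine mul_le_mul_of_nonneg_right ?_ (expMass_nonneg hx)
  rw [hb, pow_add]
  push_cast
  nlinarith [pow_pos (two_pos : (0 : ℝ) < 2) j, pow_pos (two_pos : (0 : ℝ) < 2) ℓ]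

/-- Lemma 2 (`lem:cl:goodj`) of the paper: if the prefix sums `s` of `x` do not
grow too quickly beyond index `j + ℓ`, then `S_{2^{-j}} = T_{2^{-j}} / B_{2^{-j}}`
is at most `O(b · 2^j)` (with explicit constant 1024). -/
theorem stmt_0 (D j ℓ b : ℕ) (hD : 2 ≤ D) (hℓ : 1 ≤ ℓ) (hb : b = 2 ^ ℓ)
    (x : ℕ → ℝ) (hx : ∀ i, 0 ≤ x i) (hxD : ∀ i, D < i → x i = 0)
    (s : ℕ → ℝ) (hs : ∀ k, s k = ∑ i ∈ Finset.range (2 ^ (k + 1) + 1), x i)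
    (hs0 : 1 ≤ s 0)
    (hcond : ∀ r : ℕ, 8 ≤ r →
      s (j + ℓ + r) ≤ 2 ^ (b * 2 ^ (r - 1)) * s (j + ℓ)) :
    (∑ i ∈ Finset.range (D + 1), (i : ℝ) * x i * Real.exp (-(i : ℝ) * 2 ^ (-(j : ℝ)))) /
      (∑ i ∈ Finset.range (D + 1), x i * Real.exp (-(i : ℝ) * 2 ^ (-(j : ℝ))))
      ≤ 1024 * (b : ℝ) * 2 ^ j :=
  stmt_0_general D j ℓ b hb x hx hxD s hs hcond
end

section
/- Let D ≥ 2 be a natural number, let α ≥ 2 be a real number, and let b = 2^ℓ for a natural number ℓ ≥ 1 with b ≥ 4·(log₂ α)/(log₂ D). Let s : ℕ → ℝ be a nondecreasing function with s(0) ≥ 1 and s(j) ≤ α for every j ∈ ℕ. Then the number of natural numbers j with 0.01·log₂ D ≤ j ≤ 0.1·log₂ D for which there exists a natural number r ≥ 8 satisfying s(j + ℓ + r) > 2^{b·2^{r−1}} · s(j + ℓ) is at most 0.02·log₂ D. -/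
/-!
Pass to `f j = log₂ s (j + ℓ)`, which is nondecreasing with values in `[0, log₂ α]`. A bad `j`
with witness `r ≥ 8` makes `f` rise by `b·2^(r-1) ≥ 16·b·r` between `j` and `j + r`. Scanning
greedily from the left, every bad point we meet lets us skip `r` points while paying `16·b·r` of
the total rise `log₂ α ≤ b·log₂ D / 4`, so there are at most `log₂ D / 64` bad points.
-/

open Finset Real Classical

theorem card_filter_jump_mul_le {f : ℕ → ℝ} {c M : ℝ} (hf : Monotone f) (hc : 0 ≤ c)
    (hM : ∀ j, f j ≤ M) (N lo : ℕ) :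
    (#{j ∈ Ico lo N | ∃ r, 0 < r ∧ f j + c * r ≤ f (j + r)} : ℝ) * c ≤ M - f lo := by
  by_cases hlo : N ≤ lo
  · simp only [Ico_eq_empty_of_le hlo, filter_empty, card_empty, Nat.cast_zero, zero_mul]
    linarith [hM lo]
  by_cases hjump : ∃ r, 0 < r ∧ f lo + c * r ≤ f (lo + r)
  · obtain ⟨r, hr, hgain⟩ := hjump
    have hsplit : {j ∈ Ico lo N | ∃ r, 0 < r ∧ f j + c * r ≤ f (j + r)} ⊆
        Ico lo (lo + r) ∪ {j ∈ Ico (lo + r) N | ∃ r, 0 < r ∧ f j + c * r ≤ f (j + r)} := by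
      intro j hj
      simp only [mem_union, mem_filter, mem_Ico] at hj ⊢
      by_cases hjr : j < lo + r
      · exact Or.inl ⟨hj.1.1, hjr⟩
      · exact Or.inr ⟨⟨by omega, hj.1.2⟩, hj.2⟩
    have hcard : (#{j ∈ Ico lo N | ∃ r, 0 < r ∧ f j + c * r ≤ f (j + r)} : ℝ) ≤
        r + #{j ∈ Ico (lo + r) N | ∃ r, 0 < r ∧ f j + c * r ≤ f (j + r)} := by
      have := (card_le_card hsplit).trans (card_union_le _ _)
      rw [Nat.card_Ico, Nat.add_sub_cancel_left] at this
      exact_mod_cast this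
    have hrest := card_filter_jump_mul_le hf hc hM N (lo + r)
    nlinarith
  · have hshift : {j ∈ Ico lo N | ∃ r, 0 < r ∧ f j + c * r ≤ f (j + r)} ⊆
        {j ∈ Ico (lo + 1) N | ∃ r, 0 < r ∧ f j + c * r ≤ f (j + r)} := by
      intro j hj
      simp only [mem_filter, mem_Ico] at hj ⊢
      refine ⟨⟨?_, hj.1.2⟩, hj.2⟩
      rcases hj.1.1.eq_or_lt with rfl | h
      · exact absurd hj.2 hjump
      · exact h
    have hrest := card_filter_jump_mul_le hf hc hM N (lo + 1)
    have hcard := card_le_card hshift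
    have hstep := hf (Nat.le_succ lo)
    calc (#{j ∈ Ico lo N | ∃ r, 0 < r ∧ f j + c * r ≤ f (j + r)} : ℝ) * c
        ≤ #{j ∈ Ico (lo + 1) N | ∃ r, 0 < r ∧ f j + c * r ≤ f (j + r)} * c := by
          gcongr
      _ ≤ M - f lo := by linarith
termination_by N - lo

theorem sixteen_mul_le_two_pow_pred {r : ℕ} (hr : 8 ≤ r) : 16 * r ≤ 2 ^ (r - 1) := by
  induction r, hr using Nat.le_induction with
  | base => norm_num
  | succ n hn ih =>
    have h16 : 16 ≤ 2 ^ (n - 1) := by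
      calc 16 = 2 ^ 4 := by norm_num
        _ ≤ 2 ^ (n - 1) := Nat.pow_le_pow_right (by norm_num) (by omega)
    rw [Nat.add_sub_cancel, show n = n - 1 + 1 by omega, pow_succ]
    omega

theorem logb_two_add_sixteen_mul_le {x y : ℝ} {b r : ℕ} (hr : 8 ≤ r) (hx : 0 < x)
    (h : 2 ^ (b * 2 ^ (r - 1)) * x < y) : logb 2 x + 16 * b * r ≤ logb 2 y := by
  have hlog : logb 2 (2 ^ (b * 2 ^ (r - 1)) * x) = b * 2 ^ (r - 1) + logb 2 x := by
    rw [logb_mul (by positivity) hx.ne', logb_pow, logb_self_eq_one one_lt_two]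
    push_cast
    ring
  have hr16 : (16 * r : ℝ) ≤ 2 ^ (r - 1) := by exact_mod_cast sixteen_mul_le_two_pow_pred hr
  have hb : (0 : ℝ) ≤ b := b.cast_nonneg
  nlinarith [logb_le_logb_of_le one_lt_two (by positivity) h.le]

theorem stmt_1_general (D : ℕ) (hD : 2 ≤ D) (α : ℝ)
    (ℓ b : ℕ) (hb : b = 2 ^ ℓ)
    (hbα : 4 * Real.logb 2 α / Real.logb 2 D ≤ (b : ℝ))
    (s : ℕ → ℝ) (hmono : Monotone s) (hs0 : 1 ≤ s 0) (hsα : ∀ j, s j ≤ α) :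
    (((Finset.range (D + 1)).filter (fun j : ℕ =>
        0.01 * Real.logb 2 D ≤ (j : ℝ) ∧ (j : ℝ) ≤ 0.1 * Real.logb 2 D ∧
        ∃ r : ℕ, 8 ≤ r ∧
          2 ^ (b * 2 ^ (r - 1)) * s (j + ℓ) < s (j + ℓ + r))).card : ℝ)
      ≤ 0.02 * Real.logb 2 D := by
  have hs1 : ∀ j, 1 ≤ s j := fun j => hs0.trans (hmono j.zero_le)
  have hb0 : (0 : ℝ) < b := by rw [hb]; positivity
  have hlogD : 0 < logb 2 D := logb_pos one_lt_two (by exact_mod_cast hD)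
  set f : ℕ → ℝ := fun j => logb 2 (s (j + ℓ))
  have hf : Monotone f := fun i j hij =>
    logb_le_logb_of_le one_lt_two (by linarith [hs1 (i + ℓ)]) (hmono (by omega))
  have hfM : ∀ j, f j ≤ logb 2 α := fun j =>
    logb_le_logb_of_le one_lt_two (by linarith [hs1 (j + ℓ)]) (hsα _)
  have hcount := card_filter_jump_mul_le (c := 16 * b) hf (by positivity) hfM (D + 1) 0
  have hf0 : 0 ≤ f 0 := logb_nonneg one_lt_two (hs1 _)
  have hlogα : logb 2 α ≤ b * logb 2 D / 4 := by
    rw [div_le_iff₀ hlogD] at hbα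
    linarith
  calc _ ≤ (#{j ∈ range (D + 1) | ∃ r, 0 < r ∧ f j + 16 * b * r ≤ f (j + r)} : ℝ) := by
        refine Nat.mono_cast (card_le_card (monotone_filter_right _ fun j _ hj => ?_))
        obtain ⟨-, -, r, hr, hgrow⟩ := hj
        refine ⟨r, by omega, ?_⟩
        simpa only [f, add_right_comm j] using
          logb_two_add_sixteen_mul_le hr (by linarith [hs1 (j + ℓ)]) hgrow
    _ ≤ logb 2 D / 64 := by
        rw [range_eq_Ico, le_div_iff₀ (by norm_num)]
        nlinarith
    _ ≤ 0.02 * logb 2 D := by linarith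

/-- Lemma 3 (`cl:goodj-cond`) of the paper: the number of integers `j` with
`0.01·log₂ D ≤ j ≤ 0.1·log₂ D` for which some `r ≥ 8` has
`s (j+ℓ+r) > 2^(b·2^(r-1)) · s (j+ℓ)` is at most `0.02·log₂ D`. -/
theorem stmt_1 (D : ℕ) (hD : 2 ≤ D) (α : ℝ) (hα : 2 ≤ α)
    (ℓ b : ℕ) (hℓ : 1 ≤ ℓ) (hb : b = 2 ^ ℓ)
    (hbα : 4 * Real.logb 2 α / Real.logb 2 D ≤ (b : ℝ))
    (s : ℕ → ℝ) (hmono : Monotone s) (hs0 : 1 ≤ s 0) (hsα : ∀ j, s j ≤ α) :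
    (((Finset.range (D + 1)).filter (fun j : ℕ =>
        0.01 * Real.logb 2 D ≤ (j : ℝ) ∧ (j : ℝ) ≤ 0.1 * Real.logb 2 D ∧
        ∃ r : ℕ, 8 ≤ r ∧
          2 ^ (b * 2 ^ (r - 1)) * s (j + ℓ) < s (j + ℓ + r))).card : ℝ)
      ≤ 0.02 * Real.logb 2 D :=
  stmt_1_general D hD α ℓ b hb hbα s hmono hs0 hsα
end

section
/- For every real number b ≥ 2, one has b · e^b · ∑_{r=3}^{∞} 2^r · (2/e)^{b·2^r} < 3. Equivalently, with q' = log₂ b + 7 (when b is an integer power of 2), ∑_{q=q'}^{∞} 2^q · e^{b − 2^q} · 2^{2^q} < 3. -/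
/-!
Put `d = (2/e)^(8b)`, so that the `r`-th term is `8 · 2^r · d^(2^r)`. Since `2^r ≥ r + 1` and
`d ≤ 1`, the series is dominated by the geometric series `8 d ∑ (2d)^r`, whence it is at most
`16 d` once `d ≤ 1/4`. Finally `e^b d = (e · (2/e)^8)^b = (256/e^7)^b ≤ 4^(-b)`, and
`b · 4^(-b) ≤ 1/8` for `b ≥ 2` by Bernoulli's inequality, so the left side is at most `2`.
-/

open Real

lemma two_pow_mul_pow_two_pow_le {d : ℝ} (h0 : 0 ≤ d) (h1 : d ≤ 1) (r : ℕ) :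
    2 ^ r * d ^ 2 ^ r ≤ d * (2 * d) ^ r :=
  calc 2 ^ r * d ^ 2 ^ r ≤ 2 ^ r * d ^ (r + 1) :=
        mul_le_mul_of_nonneg_left (pow_le_pow_of_le_one h0 h1 Nat.lt_two_pow_self) (by positivity)
    _ = d * (2 * d) ^ r := by ring

lemma summable_two_pow_mul_pow_two_pow {d : ℝ} (h0 : 0 ≤ d) (h : 2 * d < 1) :
    Summable fun r : ℕ ↦ 2 ^ r * d ^ 2 ^ r :=
  .of_nonneg_of_le (fun _ ↦ by positivity) (two_pow_mul_pow_two_pow_le h0 (by linarith))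
    ((summable_geometric_of_lt_one (by positivity) h).mul_left d)

lemma tsum_two_pow_mul_pow_two_pow_le {d : ℝ} (h0 : 0 ≤ d) (h : 2 * d < 1) :
    ∑' r : ℕ, 2 ^ r * d ^ 2 ^ r ≤ d * (1 - 2 * d)⁻¹ :=
  calc ∑' r : ℕ, 2 ^ r * d ^ 2 ^ r ≤ ∑' r : ℕ, d * (2 * d) ^ r :=
        (summable_two_pow_mul_pow_two_pow h0 h).tsum_le_tsum
          (two_pow_mul_pow_two_pow_le h0 (by linarith))
          ((summable_geometric_of_lt_one (by positivity) h).mul_left d)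
    _ = d * (1 - 2 * d)⁻¹ := by rw [tsum_mul_left, tsum_geometric_of_lt_one (by positivity) h]

lemma rpow_mul_two_pow_add_three {c : ℝ} (hc : 0 ≤ c) (b : ℝ) (r : ℕ) :
    c ^ (b * 2 ^ (r + 3)) = (c ^ (8 * b)) ^ 2 ^ r := by
  rw [← rpow_natCast (c ^ (8 * b)), ← rpow_mul hc]
  push_cast
  ring_nf

lemma exp_mul_rpow_eight_mul {c : ℝ} (hc : 0 ≤ c) (b : ℝ) :
    exp b * c ^ (8 * b) = (exp 1 * c ^ 8) ^ b := by
  rw [mul_rpow (exp_pos 1).le (by positivity), exp_one_rpow, rpow_mul hc]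
  norm_cast

lemma exp_one_mul_two_div_exp_one_pow_eight_le : exp 1 * (2 / exp 1) ^ 8 ≤ 1 / 4 := by
  have he : 2.7 < exp 1 := lt_trans (by norm_num) exp_one_gt_d9
  have h7 : 2.7 ^ 7 ≤ exp 1 ^ 7 := pow_le_pow_left₀ (by norm_num) he.le 7
  rw [div_pow, mul_div_assoc', div_le_div_iff₀ (by positivity) (by norm_num)]
  nlinarith [exp_pos 1]

lemma mul_rpow_quarter_le {b : ℝ} (hb : 2 ≤ b) : b * (1 / 4) ^ b ≤ 1 / 8 := by
  have bernoulli : 1 + (b - 1) * 3 ≤ (1 + 3) ^ (b - 1) :=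
    one_add_mul_self_le_rpow_one_add (by norm_num) (by linarith)
  have h4 : (4 : ℝ) ^ b = 4 * 4 ^ (b - 1) := by
    rw [rpow_sub (by norm_num), rpow_one]
    field_simp
  rw [div_rpow (by norm_num) (by norm_num), one_rpow, mul_one_div, div_le_iff₀ (by positivity), h4]
  norm_num at bernoulli
  linarith

/-- The convergence estimate used in the analysis of `S_β`: for every real `b ≥ 2`,
`b · e^b · ∑_{r=3}^∞ 2^r · (2/e)^(b·2^r) < 3`. -/
theorem stmt_2 (b : ℝ) (hb : 2 ≤ b) :
    b * Real.exp b *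
      (∑' r : ℕ, (2 : ℝ) ^ (r + 3) * (2 / Real.exp 1) ^ (b * 2 ^ (r + 3))) < 3 := by
  have hc : 0 ≤ 2 / exp 1 := by positivity
  have hsum : ∑' r : ℕ, (2 : ℝ) ^ (r + 3) * (2 / exp 1) ^ (b * 2 ^ (r + 3))
      = 8 * ∑' r : ℕ, 2 ^ r * ((2 / exp 1) ^ (8 * b)) ^ 2 ^ r := by
    rw [← tsum_mul_left]
    congr 1 with r
    rw [rpow_mul_two_pow_add_three hc, pow_add]
    ring
  set d := (2 / exp 1) ^ (8 * b)
  have hd0 : 0 ≤ d := by positivity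
  have hed : exp b * d ≤ (1 / 4) ^ b := by
    rw [exp_mul_rpow_eight_mul hc]
    gcongr
    exact exp_one_mul_two_div_exp_one_pow_eight_le
  have hd : d ≤ 1 / 4 :=
    calc d ≤ exp b * d := le_mul_of_one_le_left hd0 (one_le_exp (by linarith))
      _ ≤ (1 / 4) ^ b := hed
      _ ≤ (1 / 4) ^ (1 : ℝ) := rpow_le_rpow_of_exponent_ge (by norm_num) (by norm_num) (by linarith)
      _ = 1 / 4 := rpow_one _
  have htail : ∑' r : ℕ, 2 ^ r * d ^ 2 ^ r ≤ 2 * d :=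
    (tsum_two_pow_mul_pow_two_pow_le hd0 (by linarith)).trans <| by
      rw [← div_eq_mul_inv, div_le_iff₀ (by linarith)]
      nlinarith
  calc b * exp b * (∑' r : ℕ, (2 : ℝ) ^ (r + 3) * (2 / exp 1) ^ (b * 2 ^ (r + 3)))
      ≤ b * exp b * (8 * (2 * d)) := by rw [hsum]; gcongr
    _ = 16 * (b * (exp b * d)) := by ring
    _ ≤ 16 * (b * (1 / 4) ^ b) := by gcongr
    _ ≤ 16 * (1 / 8) := by gcongr; exact mul_rpow_quarter_le hb
    _ < 3 := by norm_num
end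

section
/- Let D ≥ 2 be a natural number and let β be a real number with 0 < β ≤ D^{−0.01}. Let M be a nonempty finite set and f : M → ℕ a function with f(m) ≤ D for all m ∈ M. Let (δ_m)_{m∈M} be independent random variables, each exponentially distributed with rate β. Then almost surely there is a unique m* ∈ M minimizing f(m) − δ_m over m ∈ M, and the expectation of f(m*) satisfies E[f(m*)] ≤ 5 · (∑_{i=0}^{D} i·x_i·e^{−iβ}) / (∑_{i=0}^{D} x_i·e^{−iβ}), where x_i := |{m ∈ M : f(m) = i}|. -/
/-
If `m` minimizes `f m - δ m`, then `δ m' ≤ δ m + (f m' - f m)` for every `m'`. Conditioning on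
`δ m = s` and using `P(δ ≤ u) ≤ exp (-e^{-β u})`, this has probability at most
`E[exp (-A e^{-β δ})]` with `A = ∑_{m' ≠ m} e^{-β (f m' - f m)}`. Since `e^{-β δ}` is uniform
on `[0, 1]`, that expectation is `(1 - e^{-A}) / A ≤ 2 / (1 + A)`, and
`2 / (1 + A) = 2 e^{-β f m} / ∑_{m'} e^{-β f m'}`. Summing `f m` against these probabilities
gives the bound even with `2` in place of `5`. Ties have probability zero because the `δ m` are
independent with atomless laws.
-/

open MeasureTheory ProbabilityTheory Finset Real
open Filter Topology
open scoped ENNReal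

section ExponentialDistribution

variable {β : ℝ}

instance nullSingletonClass_expMeasure : NullSingletonClass (expMeasure β) :=
  inferInstanceAs (NullSingletonClass (volume.withDensity _))

theorem expMeasure_Iic_le_exp_neg_exp (hβ : 0 < β) (u : ℝ) :
    expMeasure β (Set.Iic u) ≤ ENNReal.ofReal (exp (-exp (-(β * u)))) := by
  have := isProbabilityMeasure_expMeasure hβ
  rw [← ofReal_cdf, cdf_expMeasure_eq hβ]
  refine ENNReal.ofReal_le_ofReal ?_
  split_ifs
  · linarith [add_one_le_exp (-exp (-(β * u)))]
  · positivity

theorem lintegral_expMeasure (g : ℝ → ℝ≥0∞) (hg : Measurable g) :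
    ∫⁻ s, g s ∂expMeasure β =
      ∫⁻ s in Set.Ioi 0, ENNReal.ofReal (β * exp (-(β * s))) * g s := by
  have hsupp : Function.support (exponentialPDF β * g) ⊆ Set.Ici 0 := fun s hs => by
    by_contra h
    exact hs (by simp [exponentialPDF_of_neg (not_le.mp h)])
  rw [show expMeasure β = volume.withDensity (exponentialPDF β) from rfl,
    lintegral_withDensity_eq_lintegral_mul _ (f := exponentialPDF β)
      (measurable_exponentialPDFReal β).ennreal_ofReal hg,
    ← setLIntegral_eq_of_support_subset hsupp, Measure.restrict_congr_set Ioi_ae_eq_Ici.symm]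
  exact setLIntegral_congr_fun measurableSet_Ioi fun s hs => by
    simp [exponentialPDF_of_nonneg (le_of_lt hs)]

theorem hasDerivAt_exp_neg_mul_exp (A s : ℝ) :
    HasDerivAt (fun s => exp (-(A * exp (-(β * s)))))
      (β * exp (-(β * s)) * (A * exp (-(A * exp (-(β * s)))))) s := by
  have := (((hasDerivAt_id s).const_mul β).neg.exp.const_mul A).neg.exp
  exact this.congr_deriv (by simp only [id, Pi.neg_apply]; ring)

theorem lintegral_expMeasure_mul_exp_neg_mul_exp (hβ : 0 < β) {A : ℝ} (hA : 0 ≤ A) :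
    ∫⁻ s, ENNReal.ofReal (A * exp (-(A * exp (-(β * s))))) ∂expMeasure β =
      ENNReal.ofReal (1 - exp (-A)) := by
  have hderiv : ∀ s ∈ Set.Ici (0 : ℝ), HasDerivAt (fun s => exp (-(A * exp (-(β * s)))))
      (β * exp (-(β * s)) * (A * exp (-(A * exp (-(β * s)))))) s :=
    fun s _ => hasDerivAt_exp_neg_mul_exp A s
  have hnonneg : ∀ s ∈ Set.Ioi (0 : ℝ),
      0 ≤ β * exp (-(β * s)) * (A * exp (-(A * exp (-(β * s))))) := fun s _ => by positivity
  have hlim : Tendsto (fun s => exp (-(A * exp (-(β * s))))) atTop (𝓝 1) := by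
    have : Tendsto (fun s => -(A * exp (-(β * s)))) atTop (𝓝 0) := by
      simpa using ((tendsto_exp_atBot.comp
        (tendsto_neg_atTop_atBot.comp (tendsto_id.const_mul_atTop hβ))).const_mul A).neg
    simpa only [exp_zero, Function.comp_def] using (continuous_exp.tendsto 0).comp this
  rw [lintegral_expMeasure _ (by fun_prop)]
  simp_rw [← ENNReal.ofReal_mul (by positivity : (0 : ℝ) ≤ β * exp (-(β * _)))]
  rw [← ofReal_integral_eq_lintegral_ofReal
      (integrableOn_Ioi_deriv_of_nonneg' hderiv hnonneg hlim)
      (ae_restrict_of_forall_mem measurableSet_Ioi hnonneg),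
    integral_Ioi_of_hasDerivAt_of_nonneg' hderiv hnonneg hlim]
  simp

theorem lintegral_expMeasure_exp_neg_mul_exp_le (hβ : 0 < β) {A : ℝ} (hA : 0 ≤ A) :
    ∫⁻ s, ENNReal.ofReal (exp (-(A * exp (-(β * s))))) ∂expMeasure β ≤
      ENNReal.ofReal (2 / (1 + A)) := by
  have := isProbabilityMeasure_expMeasure hβ
  set I := ∫⁻ s, ENNReal.ofReal (exp (-(A * exp (-(β * s))))) ∂expMeasure β
  have hI : I ≤ 1 := by
    calc I ≤ ∫⁻ _, 1 ∂expMeasure β :=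
          lintegral_mono fun s =>
            ENNReal.ofReal_le_one.mpr (exp_le_one_iff.mpr (neg_nonpos.mpr (by positivity)))
      _ = 1 := by simp
  have hAI : ENNReal.ofReal A * I ≤ 1 := by
    rw [← lintegral_const_mul _ (by fun_prop)]
    simp_rw [← ENNReal.ofReal_mul hA]
    rw [lintegral_expMeasure_mul_exp_neg_mul_exp hβ hA]
    exact ENNReal.ofReal_le_one.mpr (by linarith [exp_pos (-A)])
  rw [ENNReal.ofReal_div_of_pos (by linarith),
    ENNReal.le_div_iff_mul_le (.inl (ENNReal.ofReal_pos.mpr (by linarith)).ne')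
      (.inl ENNReal.ofReal_ne_top),
    mul_comm, ENNReal.ofReal_add zero_le_one hA, add_mul, ENNReal.ofReal_one, one_mul]
  calc I + ENNReal.ofReal A * I ≤ 1 + 1 := add_le_add hI hAI
    _ = ENNReal.ofReal 2 := by norm_num

end ExponentialDistribution

theorem measure_pi_setOf_forall_ne_le_add {ι : Type*} [Fintype ι] [DecidableEq ι]
    (ν : Measure ℝ) [SigmaFinite ν] (i : ι) (c : ι → ℝ) :
    Measure.pi (fun _ : ι => ν) {g | ∀ j ≠ i, g j ≤ g i + c j} =
      ∫⁻ s, ∏ j : {j // j ≠ i}, ν (Set.Iic (s + c j)) ∂ν := by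
  let e := MeasurableEquiv.piEquivPiSubtypeProd (fun _ : ι => ℝ) (· = i)
  let S : Set (({j // j = i} → ℝ) × ({j // j ≠ i} → ℝ)) :=
    {p | ∀ j, p.2 j ≤ p.1 ⟨i, rfl⟩ + c j}
  have hS : MeasurableSet S := by
    simp only [S, Set.ofPred_forall]
    exact MeasurableSet.iInter fun j => measurableSet_le (by fun_prop) (by fun_prop)
  have hpre : {g : ι → ℝ | ∀ j ≠ i, g j ≤ g i + c j} = e ⁻¹' S := by
    ext g
    simp [S, e, MeasurableEquiv.piEquivPiSubtypeProd, Equiv.piEquivPiSubtypeProd]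
  have hsec (a : {j // j = i} → ℝ) :
      Prod.mk a ⁻¹' S =
        Set.pi Set.univ fun j : {j // j ≠ i} => Set.Iic (a ⟨i, rfl⟩ + c j) := by
    ext b; simp [S, Pi.le_def]
  rw [hpre, (measurePreserving_piEquivPiSubtypeProd _ _).measure_preimage hS.nullMeasurableSet,
    Measure.prod_apply hS]
  simp_rw [hsec, Measure.pi_pi]
  convert (measurePreserving_funUnique ν {j // j = i}).lintegral_comp_emb
    (MeasurableEquiv.funUnique _ _).measurableEmbedding
    (fun s => ∏ j : {j // j ≠ i}, ν (Set.Iic (s + c j))) using 3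
  rfl

theorem expMeasure_pi_setOf_forall_ne_le_add_le {ι : Type*} [Fintype ι] [DecidableEq ι] {β : ℝ}
    (hβ : 0 < β) (i : ι) (c : ι → ℝ) :
    Measure.pi (fun _ : ι => expMeasure β) {g | ∀ j ≠ i, g j ≤ g i + c j} ≤
      ENNReal.ofReal (2 / (1 + ∑ j : {j // j ≠ i}, exp (-(β * c j)))) := by
  have := isProbabilityMeasure_expMeasure hβ
  rw [measure_pi_setOf_forall_ne_le_add]
  refine (lintegral_mono fun s => ?_).trans
    (lintegral_expMeasure_exp_neg_mul_exp_le hβ (by positivity))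
  calc ∏ j : {j // j ≠ i}, expMeasure β (Set.Iic (s + c j))
      ≤ ∏ j : {j // j ≠ i}, ENNReal.ofReal (exp (-exp (-(β * (s + c j))))) :=
        prod_le_prod' fun j _ => expMeasure_Iic_le_exp_neg_exp hβ _
    _ = ENNReal.ofReal (exp (-((∑ j : {j // j ≠ i}, exp (-(β * c j))) * exp (-(β * s))))) := by
        rw [← ENNReal.ofReal_prod_of_nonneg fun _ _ => (exp_pos _).le, ← exp_sum, sum_mul,
          ← sum_neg_distrib]
        simp only [← exp_add]
        ring_nf

namespace ProbabilityTheory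

variable {Ω : Type*} [MeasurableSpace Ω] {μ : Measure Ω}

theorem IndepFun.measure_sub_eq_const [IsFiniteMeasure μ] {X Y : Ω → ℝ} (h : IndepFun X Y μ)
    (hX : Measurable X) (hY : Measurable Y) [NullSingletonClass (μ.map X)] (c : ℝ) :
    μ {ω | X ω - Y ω = c} = 0 := by
  have hS : MeasurableSet {p : ℝ × ℝ | p.1 - p.2 = c} :=
    measurableSet_eq_fun (by fun_prop) measurable_const
  have hsec (b : ℝ) : (fun a => (a, b)) ⁻¹' {p : ℝ × ℝ | p.1 - p.2 = c} = {b + c} := by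
    ext a; simp [sub_eq_iff_eq_add']
  rw [show {ω | X ω - Y ω = c} = (fun ω => (X ω, Y ω)) ⁻¹' {p | p.1 - p.2 = c} from rfl,
    ← Measure.map_apply (hX.prodMk hY) hS,
    (indepFun_iff_map_prod_eq_prod_map_map hX.aemeasurable hY.aemeasurable).mp h,
    Measure.prod_apply_symm hS]
  simp [hsec]

theorem iIndepFun.ae_injective_sub {M : Type*} [Finite M] {δ : M → Ω → ℝ}
    (hindep : iIndepFun δ μ) (hδ : ∀ m, Measurable (δ m))
    (hatom : ∀ m, NullSingletonClass (μ.map (δ m))) (g : M → ℝ) :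
    ∀ᵐ ω ∂μ, Function.Injective fun m => g m - δ m ω := by
  have := hindep.isProbabilityMeasure
  simp only [Function.Injective, ae_all_iff]
  intro a b
  by_cases hab : a = b
  · exact ae_of_all _ fun _ _ => hab
  have := hatom b
  have := (hindep.indepFun (Ne.symm hab)).measure_sub_eq_const (hδ b) (hδ a) (g b - g a)
  rw [ae_iff]
  refine measure_mono_null (fun ω hω => ?_) this
  obtain ⟨heq, -⟩ := Classical.not_imp.mp hω
  change δ b ω - δ a ω = g b - g a
  linarith

theorem iIndepFun.measure_forall_sub_le_sub_le {M : Type*} [Fintype M] {δ : M → Ω → ℝ}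
    (hindep : iIndepFun δ μ) (hδ : ∀ m, Measurable (δ m)) {β : ℝ}
    (hβ : 0 < β) (hdist : ∀ m, μ.map (δ m) = expMeasure β) (g : M → ℝ) (i : M) :
    μ {ω | ∀ j, g i - δ i ω ≤ g j - δ j ω} ≤
      ENNReal.ofReal (2 * exp (-(β * g i)) / ∑ j, exp (-(β * g j))) := by
  classical
  have hlaw : μ.map (fun ω m => δ m ω) = Measure.pi fun _ => expMeasure β := by
    rw [hindep.map_fun_eq_pi_map fun m => (hδ m).aemeasurable]
    simp_rw [hdist]
  have hnorm : 1 + ∑ j : {j // j ≠ i}, exp (-(β * (g j - g i))) =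
      exp (β * g i) * ∑ j, exp (-(β * g j)) := by
    rw [Fintype.sum_eq_add_sum_subtype_ne _ i, mul_add, mul_sum, ← exp_add, add_neg_cancel,
      exp_zero]
    congr 1
    refine sum_congr rfl fun j _ => ?_
    rw [← exp_add]
    ring_nf
  calc μ {ω | ∀ j, g i - δ i ω ≤ g j - δ j ω}
      ≤ μ ((fun ω m => δ m ω) ⁻¹' {x | ∀ j ≠ i, x j ≤ x i + (g j - g i)}) :=
        measure_mono fun ω h j _ => by linarith [h j]
    _ ≤ Measure.pi (fun _ => expMeasure β) {x | ∀ j ≠ i, x j ≤ x i + (g j - g i)} :=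
        hlaw ▸ Measure.le_map_apply (measurable_pi_lambda _ hδ).aemeasurable _
    _ ≤ ENNReal.ofReal (2 / (1 + ∑ j : {j // j ≠ i}, exp (-(β * (g j - g i))))) :=
        expMeasure_pi_setOf_forall_ne_le_add_le hβ i _
    _ = ENNReal.ofReal (2 * exp (-(β * g i)) / ∑ j, exp (-(β * g j))) := by
        rw [hnorm, exp_neg, div_mul_eq_div_div_swap, div_eq_mul_inv _ (exp _), mul_div_right_comm]

end ProbabilityTheory

theorem Function.Injective.existsUnique_forall_le {M α : Type*} [Finite M] [Nonempty M]
    [LinearOrder α] {g : M → α} (hg : Function.Injective g) : ∃! m, ∀ m', g m ≤ g m' := by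
  obtain ⟨m, hm⟩ := Finite.exists_min g
  exact ⟨m, hm, fun m' hm' => hg (le_antisymm (hm' m) (hm m'))⟩

theorem sum_comp_eq_sum_range_card_smul {M R : Type*} [Fintype M] [AddCommMonoid R] {f : M → ℕ}
    {D : ℕ} (hf : ∀ m, f m ≤ D) (φ : ℕ → R) :
    ∑ m, φ (f m) = ∑ i ∈ range (D + 1), #{m | f m = i} • φ i := by
  rw [← sum_fiberwise_of_maps_to (g := f) (t := range (D + 1))
    fun m _ => mem_range.mpr (Nat.lt_succ_of_le (hf m))]
  refine sum_congr rfl fun i _ => ?_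
  rw [sum_congr rfl fun m hm => by rw [(mem_filter.mp hm).2], sum_const]

theorem integral_comp_eq_sum_measureReal_mul {Ω M : Type*} [MeasurableSpace Ω] {μ : Measure Ω}
    [IsFiniteMeasure μ] [Fintype M] [MeasurableSpace M] [MeasurableSingletonClass M] {X : Ω → M}
    (hX : Measurable X) (h : M → ℝ) :
    ∫ ω, h (X ω) ∂μ = ∑ m, μ.real (X ⁻¹' {m}) * h m := by
  rw [← integral_map hX.aemeasurable (Measurable.of_discrete.aestronglyMeasurable),
    integral_fintype Integrable.of_finite]
  simp [map_measureReal_apply hX (measurableSet_singleton _)]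

theorem stmt_3_general {Ω : Type*} [MeasurableSpace Ω] (μ : Measure Ω) [IsProbabilityMeasure μ]
    (D : ℕ) (β : ℝ) (hβ0 : 0 < β)
    {M : Type*} [Fintype M] [Nonempty M] [MeasurableSpace M] [MeasurableSingletonClass M]
    (f : M → ℕ) (hf : ∀ m, f m ≤ D)
    (δ : M → Ω → ℝ) (hδmeas : ∀ m, Measurable (δ m))
    (hindep : iIndepFun δ μ)
    (hdist : ∀ m, μ.map (δ m) = expMeasure β)
    (x : ℕ → ℝ) (hx : ∀ i, x i = ((Finset.univ.filter (fun m : M => f m = i)).card : ℝ)) :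
    (∀ᵐ ω ∂μ, ∃! m : M, ∀ m' : M,
        (f m : ℝ) - δ m ω ≤ (f m' : ℝ) - δ m' ω) ∧
    ∀ mStar : Ω → M, Measurable mStar →
      (∀ᵐ ω ∂μ, ∀ m' : M,
        (f (mStar ω) : ℝ) - δ (mStar ω) ω ≤ (f m' : ℝ) - δ m' ω) →
      (∫ ω, (f (mStar ω) : ℝ) ∂μ) ≤
        5 * (∑ i ∈ Finset.range (D + 1), (i : ℝ) * x i * Real.exp (-(i : ℝ) * β)) /
            (∑ i ∈ Finset.range (D + 1), x i * Real.exp (-(i : ℝ) * β)) := by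
  refine ⟨?_, fun mStar hmStar hmin => ?_⟩
  · filter_upwards [hindep.ae_injective_sub hδmeas (fun m => hdist m ▸ inferInstance)
      fun m => (f m : ℝ)] with ω hω
    exact hω.existsUnique_forall_le
  set B := ∑ m, exp (-(β * f m)) with hB
  have hprob (m : M) : μ.real (mStar ⁻¹' {m}) ≤ 2 * exp (-(β * f m)) / B := by
    have hsub : mStar ⁻¹' {m} ≤ᵐ[μ] {ω | ∀ m', (f m : ℝ) - δ m ω ≤ f m' - δ m' ω} :=
      hmin.mono fun ω h (hω : mStar ω = m) => hω ▸ h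
    exact ENNReal.toReal_le_of_le_ofReal (by positivity) <| (measure_mono_ae hsub).trans
      (hindep.measure_forall_sub_le_sub_le hδmeas hβ0 hdist (fun m => (f m : ℝ)) m)
  have hlevels (φ : ℕ → ℝ) : ∑ m, φ (f m) = ∑ i ∈ range (D + 1), x i * φ i := by
    simp [sum_comp_eq_sum_range_card_smul hf, hx]
  calc ∫ ω, (f (mStar ω) : ℝ) ∂μ = ∑ m, μ.real (mStar ⁻¹' {m}) * f m :=
        integral_comp_eq_sum_measureReal_mul hmStar fun m => (f m : ℝ)
    _ ≤ ∑ m, 2 * exp (-(β * f m)) / B * f m := sum_le_sum fun m _ => by gcongr; exact hprob m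
    _ = 2 * (∑ m, (f m : ℝ) * exp (-(β * f m))) / B := by
        rw [mul_sum, sum_div]
        exact sum_congr rfl fun m _ => by ring
    _ ≤ 5 * (∑ m, (f m : ℝ) * exp (-(β * f m))) / B := by gcongr; norm_num
    _ = _ := by
        rw [hB, hlevels fun i => i * exp (-(β * i)), hlevels fun i => exp (-(β * i))]
        simp only [mul_comm β, neg_mul]
        congr 2
        exact sum_congr rfl fun i _ => by ring

/-- Lemma 1 (`lem:edist`) of the paper: with independent rate-`β` exponential
variables `δ_m`, almost surely there is a unique `m*` minimizing `f m - δ m`, and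
the expectation of `f m*` is at most `5 · T_β / B_β`. -/
theorem stmt_3 {Ω : Type*} [MeasurableSpace Ω] (μ : Measure Ω) [IsProbabilityMeasure μ]
    (D : ℕ) (hD : 2 ≤ D) (β : ℝ) (hβ0 : 0 < β) (hβD : β ≤ (D : ℝ) ^ (-(0.01) : ℝ))
    {M : Type*} [Fintype M] [Nonempty M] [MeasurableSpace M] [MeasurableSingletonClass M]
    (f : M → ℕ) (hf : ∀ m, f m ≤ D)
    (δ : M → Ω → ℝ) (hδmeas : ∀ m, Measurable (δ m))
    (hindep : iIndepFun δ μ)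
    (hdist : ∀ m, μ.map (δ m) = expMeasure β)
    (x : ℕ → ℝ) (hx : ∀ i, x i = ((Finset.univ.filter (fun m : M => f m = i)).card : ℝ)) :
    (∀ᵐ ω ∂μ, ∃! m : M, ∀ m' : M,
        (f m : ℝ) - δ m ω ≤ (f m' : ℝ) - δ m' ω) ∧
    ∀ mStar : Ω → M, Measurable mStar →
      (∀ᵐ ω ∂μ, ∀ m' : M,
        (f (mStar ω) : ℝ) - δ (mStar ω) ω ≤ (f m' : ℝ) - δ m' ω) →
      (∫ ω, (f (mStar ω) : ℝ) ∂μ) ≤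
        5 * (∑ i ∈ Finset.range (D + 1), (i : ℝ) * x i * Real.exp (-(i : ℝ) * β)) /
            (∑ i ∈ Finset.range (D + 1), x i * Real.exp (-(i : ℝ) * β)) :=
  stmt_3_general μ D β hβ0 f hf δ hδmeas hindep hdist x hx
end

section
/- Let N be a finite set, let i be a natural number, let p : N → ℝ satisfy 0 ≤ p(u) ≤ 1/2 for all u ∈ N, and let p_v be a real number with 0 ≤ p_v ≤ 1/2. Set d := ∑_{u∈N} p(u) and q := ∑_{u∈N} (p(u)/2^i) · (1 − p_v/2^i) · ∏_{w∈N, w≠u} (1 − p(w)/2^i). Then q ≥ 2^{−1−i} · d · 4^{−2^{−i}·d}. -/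
open Finset Real

lemma four_rpow_le_one_sub (x : ℝ) (h0 : 0 ≤ x) (h1 : x ≤ 1/2) :
    (4:ℝ) ^ (-x) ≤ 1 - x := by
  have hlog : Real.exp (-(1/2) * Real.log 4) = 1/2 := by
    have h4 : Real.log 4 = 2 * Real.log 2 := by
      rw [show (4:ℝ) = 2^2 by norm_num, Real.log_pow]; push_cast; ring
    rw [h4, show -(1/2) * (2 * Real.log 2) = -Real.log 2 by ring, Real.exp_neg,
      Real.exp_log (by norm_num : (0:ℝ) < 2)]
    norm_num
  have hc := convexOn_exp.2 (Set.mem_univ (0:ℝ)) (Set.mem_univ (-(1/2) * Real.log 4))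
    (by linarith : (0:ℝ) ≤ 1 - 2*x) (by linarith : (0:ℝ) ≤ 2*x) (by ring)
  simp only [smul_eq_mul] at hc
  rw [Real.exp_zero, hlog] at hc
  have heq : (4:ℝ)^(-x) = Real.exp ((1-2*x)*0 + 2*x*(-(1/2)*Real.log 4)) := by
    rw [Real.rpow_def_of_pos (by norm_num : (0:ℝ) < 4)]
    congr 1; ring
  rw [heq]
  linarith

/-- Lower bound on the probability `q` that a listening node hears a message:
`q ≥ 2^{-1-i} · d · 4^{-2^{-i}·d}`. -/
theorem stmt_4 {U : Type*} [DecidableEq U] (N : Finset U) (i : ℕ)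
    (p : U → ℝ) (hp : ∀ u ∈ N, 0 ≤ p u ∧ p u ≤ 1 / 2)
    (pv : ℝ) (hpv : 0 ≤ pv ∧ pv ≤ 1 / 2)
    (d q : ℝ) (hd : d = ∑ u ∈ N, p u)
    (hq : q = ∑ u ∈ N, (p u / 2 ^ i) * (1 - pv / 2 ^ i) *
      ∏ w ∈ N.erase u, (1 - p w / 2 ^ i)) :
    (2 : ℝ) ^ (-1 - (i : ℝ)) * d * (4 : ℝ) ^ (-(2 : ℝ) ^ (-(i : ℝ)) * d) ≤ q := by
  set t : ℝ := (2:ℝ) ^ i with ht_def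
  have ht1 : (1:ℝ) ≤ t := one_le_pow₀ (by norm_num)
  have ht0 : (0:ℝ) < t := by linarith
  have hd0 : 0 ≤ d := by
    rw [hd]; exact Finset.sum_nonneg fun u hu => (hp u hu).1
  set X : ℝ := (4:ℝ) ^ (-(d/t)) with hX_def
  have hX0 : 0 < X := Real.rpow_pos_of_pos (by norm_num) _
  -- bound each term
  have hterm : ∀ u ∈ N, p u * ((1/t) * (1/2) * X) ≤
      (p u / t) * (1 - pv / t) * ∏ w ∈ N.erase u, (1 - p w / t) := by
    intro u hu
    have hpu0 : 0 ≤ p u := (hp u hu).1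
    have hpv2 : (1:ℝ)/2 ≤ 1 - pv / t := by
      have : pv / t ≤ pv := by
        rw [div_le_iff₀ ht0]
        nlinarith [hpv.1]
      linarith [hpv.2]
    -- product bound
    have hS : ∑ w ∈ N.erase u, p w ≤ d := by
      rw [hd]
      exact Finset.sum_le_sum_of_subset_of_nonneg (Finset.erase_subset u N)
        (fun w hw _ => (hp w hw).1)
    have hprodeq : ∏ w ∈ N.erase u, (4:ℝ) ^ (-(p w / t)) =
        (4:ℝ) ^ (-((∑ w ∈ N.erase u, p w) / t)) := by
      have hrw : ∀ w ∈ N.erase u, (4:ℝ) ^ (-(p w / t)) =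
          Real.exp (Real.log 4 * -(p w / t)) :=
        fun w _ => Real.rpow_def_of_pos (by norm_num) _
      rw [Finset.prod_congr rfl hrw, ← Real.exp_sum,
        Real.rpow_def_of_pos (by norm_num : (0:ℝ) < 4)]
      congr 1
      rw [← Finset.mul_sum]
      congr 1
      rw [Finset.sum_div]
      simp
    have hprod1 : X ≤ ∏ w ∈ N.erase u, (4:ℝ) ^ (-(p w / t)) := by
      rw [hprodeq, hX_def]
      apply Real.rpow_le_rpow_of_exponent_le (by norm_num)
      rw [neg_le_neg_iff]
      gcongr
    have hprod2 : ∏ w ∈ N.erase u, (4:ℝ) ^ (-(p w / t)) ≤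
        ∏ w ∈ N.erase u, (1 - p w / t) := by
      apply Finset.prod_le_prod
      · intro w _; exact (Real.rpow_pos_of_pos (by norm_num) _).le
      · intro w hw
        have hw' := hp w (Finset.mem_of_mem_erase hw)
        apply four_rpow_le_one_sub
        · exact div_nonneg hw'.1 ht0.le
        · calc p w / t ≤ p w := by
                rw [div_le_iff₀ ht0]; nlinarith [hw'.1]
            _ ≤ 1/2 := hw'.2
    have hXP : X ≤ ∏ w ∈ N.erase u, (1 - p w / t) := le_trans hprod1 hprod2
    have h1 : p u * ((1/t) * (1/2) * X) = (p u / t) * (1/2) * X := by ring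
    rw [h1]
    apply mul_le_mul _ hXP hX0.le
    · positivity
    · exact mul_le_mul_of_nonneg_left hpv2 (by positivity)
  -- sum up
  have hsum : ∑ u ∈ N, p u * ((1/t) * (1/2) * X) ≤ q := by
    rw [hq]; exact Finset.sum_le_sum hterm
  rw [← Finset.sum_mul, ← hd] at hsum
  -- final equality
  have h2 : (2:ℝ) ^ (-1 - (i:ℝ)) = (1/2) * (1/t) := by
    rw [show (-1 - (i:ℝ)) = (-1) + (-(i:ℝ)) by ring, Real.rpow_add (by norm_num),
      Real.rpow_neg_one, Real.rpow_neg (by norm_num), Real.rpow_natCast]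
    rw [ht_def]; ring
  have h3 : (4:ℝ) ^ (-(2:ℝ) ^ (-(i:ℝ)) * d) = X := by
    rw [hX_def]
    congr 1
    rw [Real.rpow_neg (by norm_num), Real.rpow_natCast, ← ht_def]
    field_simp
  rw [h2, h3]
  calc (1/2) * (1/t) * d * X = d * ((1/t) * (1/2) * X) := by ring
    _ ≤ q := hsum
end

section
/- Let N be a finite set, let p : N → ℝ satisfy 0 ≤ p(u) ≤ 1/2 for all u ∈ N, and let p_v be a real number with 0 ≤ p_v ≤ 1/2. Set d := ∑_{u∈N} p(u) and suppose d ≥ 1. Let j := ⌊log₂ d⌋. Then ∑_{u∈N} (p(u)/2^j) · (1 − p_v/2^j) · ∏_{w∈N, w≠u} (1 − p(w)/2^j) ≥ 1/32. -/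
open Finset Real

lemma aux_exp_bound (x : ℝ) (h0 : 0 ≤ x) (h1 : x ≤ 1/2) :
    Real.exp (-(Real.log 4) * x) ≤ 1 - x := by
  have hconv := convexOn_exp
  have ht0 : (0:ℝ) ≤ 1 - 2*x := by linarith
  have ht1 : (0:ℝ) ≤ 2*x := by linarith
  have h := hconv.2 (Set.mem_univ (0:ℝ)) (Set.mem_univ (-Real.log 2)) ht0 ht1 (by ring)
  simp only [smul_eq_mul, mul_zero, zero_add, Real.exp_zero, mul_one] at h
  have h2 : Real.exp (-Real.log 2) = 1/2 := by
    rw [Real.exp_neg, Real.exp_log (by norm_num)]; norm_num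
  have h4 : Real.log 4 = 2 * Real.log 2 := by
    rw [show (4:ℝ) = 2^2 by norm_num, Real.log_pow]; push_cast; ring
  calc Real.exp (-(Real.log 4) * x) = Real.exp (2*x * (-Real.log 2)) := by
        rw [h4]; ring_nf
    _ ≤ (1-2*x) + 2*x * Real.exp (-Real.log 2) := h
    _ = 1 - x := by rw [h2]; ring

/-- If the effective degree `d = ∑ p u` is at least `1` and `j = ⌊log₂ d⌋`, then
the probability that a listening node hears a message in one time-step is at
least `1/32`. -/
theorem stmt_6 {U : Type*} [DecidableEq U] (N : Finset U)
    (p : U → ℝ) (hp : ∀ u ∈ N, 0 ≤ p u ∧ p u ≤ 1 / 2)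
    (pv : ℝ) (hpv : 0 ≤ pv ∧ pv ≤ 1 / 2)
    (d : ℝ) (hd : d = ∑ u ∈ N, p u) (hd1 : 1 ≤ d)
    (j : ℕ) (hj : j = ⌊Real.logb 2 d⌋₊) :
    1 / 32 ≤ ∑ u ∈ N, (p u / 2 ^ j) * (1 - pv / 2 ^ j) *
      ∏ w ∈ N.erase u, (1 - p w / 2 ^ j) := by
  have hd0 : (0:ℝ) < d := lt_of_lt_of_le one_pos hd1
  set P : ℝ := 2 ^ j with hPdef
  have hP1 : (1:ℝ) ≤ P := one_le_pow₀ (by norm_num)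
  have hP0 : (0:ℝ) < P := lt_of_lt_of_le one_pos hP1
  -- P ≤ d
  have hPd : P ≤ d := by
    have hlog : (j:ℝ) ≤ Real.logb 2 d := by
      rw [hj]; exact Nat.floor_le (Real.logb_nonneg one_lt_two hd1)
    calc P = (2:ℝ) ^ (j:ℝ) := by rw [Real.rpow_natCast]
      _ ≤ (2:ℝ) ^ (Real.logb 2 d) := Real.rpow_le_rpow_of_exponent_le one_le_two hlog
      _ = d := Real.rpow_logb two_pos (by norm_num) hd0
  -- d < 2 P
  have hd2 : d < 2 * P := by
    have hlog : Real.logb 2 d < (j:ℝ) + 1 := by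
      rw [hj]; exact Nat.lt_floor_add_one _
    calc d = (2:ℝ) ^ (Real.logb 2 d) := (Real.rpow_logb two_pos (by norm_num) hd0).symm
      _ < (2:ℝ) ^ ((j:ℝ) + 1) := Real.rpow_lt_rpow_of_exponent_lt one_lt_two hlog
      _ = 2 * P := by
          rw [Real.rpow_add two_pos, Real.rpow_natCast, Real.rpow_one]; ring
  -- bounds on q u = p u / P
  have hq0 : ∀ u ∈ N, 0 ≤ p u / P := fun u hu => div_nonneg (hp u hu).1 hP0.le
  have hq2 : ∀ u ∈ N, p u / P ≤ 1/2 := by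
    intro u hu
    rw [div_le_iff₀ hP0]
    calc p u ≤ 1/2 := (hp u hu).2
      _ ≤ 1/2 * P := by nlinarith
  -- the product over all of N is at least 1/16
  have hprod : (1:ℝ)/16 ≤ ∏ w ∈ N, (1 - p w / P) := by
    have h1 : ∏ w ∈ N, Real.exp (-(Real.log 4) * (p w / P)) ≤ ∏ w ∈ N, (1 - p w / P) :=
      Finset.prod_le_prod (fun w _ => (Real.exp_pos _).le)
        (fun w hw => aux_exp_bound _ (hq0 w hw) (hq2 w hw))
    have h2 : ∏ w ∈ N, Real.exp (-(Real.log 4) * (p w / P))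
        = Real.exp (-(Real.log 4) * (d / P)) := by
      rw [← Real.exp_sum, ← Finset.mul_sum, hd, Finset.sum_div]
    have hdP2 : d / P ≤ 2 := by rw [div_le_iff₀ hP0]; linarith
    have h3 : Real.exp (-(Real.log 4) * 2) ≤ Real.exp (-(Real.log 4) * (d / P)) := by
      apply Real.exp_le_exp.mpr
      have hlog4 : 0 < Real.log 4 := Real.log_pos (by norm_num)
      nlinarith
    have h4 : Real.exp (-(Real.log 4) * 2) = 1/16 := by
      rw [show -(Real.log 4) * 2 = -Real.log 16 by
            rw [show (16:ℝ) = 4^2 by norm_num, Real.log_pow]; push_cast; ring,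
          Real.exp_neg, Real.exp_log (by norm_num)]; norm_num
    rw [h2] at h1
    rw [← h4] at *
    linarith
  -- termwise bound
  have hterm : ∀ u ∈ N, p u / P * (1/32) ≤
      (p u / P) * (1 - pv / P) * ∏ w ∈ N.erase u, (1 - p w / P) := by
    intro u hu
    have hpv2 : (1:ℝ)/2 ≤ 1 - pv / P := by
      have : pv / P ≤ 1/2 := by
        rw [div_le_iff₀ hP0]
        calc pv ≤ 1/2 := hpv.2
          _ ≤ 1/2 * P := by nlinarith
      linarith
    have herase_nonneg : (0:ℝ) ≤ ∏ w ∈ N.erase u, (1 - p w / P) :=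
      Finset.prod_nonneg fun w hw => by
        have := hq2 w (Finset.mem_of_mem_erase hw); linarith
    have hNle : ∏ w ∈ N, (1 - p w / P) ≤ ∏ w ∈ N.erase u, (1 - p w / P) := by
      rw [← Finset.mul_prod_erase N _ hu]
      have h1u : 1 - p u / P ≤ 1 := by have := hq0 u hu; linarith
      nlinarith
    have herase : (1:ℝ)/16 ≤ ∏ w ∈ N.erase u, (1 - p w / P) := le_trans hprod hNle
    have hq0u := hq0 u hu
    have h32 : (1:ℝ)/32 ≤ (1 - pv / P) * ∏ w ∈ N.erase u, (1 - p w / P) := by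
      nlinarith
    calc p u / P * (1/32) ≤ p u / P * ((1 - pv / P) * ∏ w ∈ N.erase u, (1 - p w / P)) :=
          mul_le_mul_of_nonneg_left h32 hq0u
      _ = p u / P * (1 - pv / P) * ∏ w ∈ N.erase u, (1 - p w / P) := by ring
  calc (1:ℝ)/32 ≤ (d / P) * (1/32) := by
        have : (1:ℝ) ≤ d / P := (one_le_div hP0).mpr hPd
        nlinarith
    _ = ∑ u ∈ N, p u / P * (1/32) := by
        rw [hd, Finset.sum_div, Finset.sum_mul]
    _ ≤ ∑ u ∈ N, (p u / P) * (1 - pv / P) * ∏ w ∈ N.erase u, (1 - p w / P) :=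
        Finset.sum_le_sum hterm
end

section
/- Let V be a finite set, v ∈ V, and N ⊆ V \ {v}. Let p : V → ℝ satisfy p(v) = 1/2 and 0 ≤ p(u) ≤ 1/2 for all u ∈ V, and suppose ∑_{u∈N} p(u) < 1. Let (X_u)_{u∈V} be an independent family of Bernoulli random variables with P(X_u = 1) = p(u). Then P(X_v = 1 and X_u = 0 for all u ∈ N) ≥ 1/8. -/
open MeasureTheory ProbabilityTheory Finset

/-! By independence the event has probability `p v * ∏_{u ∈ N} P(X u = false)`,
and `P(X u = false) ≥ 1 - p u`. For `0 ≤ t ≤ 1/2` the concave function `1 - t` dominates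
the convex function `4^(-t)` (they agree at both ends), so
`∏ (1 - p u) ≥ 4^(-∑ p u) ≥ 1/4`. -/

-- Bernoulli's inequality `(1 - 1/2) ^ (2t) ≤ 1 - t` for the exponent `2t ∈ [0, 1]`.
lemma Real.quarter_rpow_le_one_sub {t : ℝ} (h0 : 0 ≤ t) (h1 : t ≤ 1 / 2) :
    (1 / 4 : ℝ) ^ t ≤ 1 - t := by
  have h := rpow_one_add_le_one_add_mul_self (s := -1 / 2) (by norm_num)
    (by linarith : 0 ≤ 2 * t) (by linarith : 2 * t ≤ 1)
  rw [Real.rpow_mul (by norm_num)] at h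
  norm_num at h
  linarith

lemma Finset.quarter_le_prod_one_sub {ι : Type*} (s : Finset ι) (t : ι → ℝ)
    (ht : ∀ i ∈ s, 0 ≤ t i ∧ t i ≤ 1 / 2) (hsum : ∑ i ∈ s, t i ≤ 1) :
    1 / 4 ≤ ∏ i ∈ s, (1 - t i) :=
  calc (1 / 4 : ℝ) = (1 / 4) ^ (1 : ℝ) := (Real.rpow_one _).symm
    _ ≤ (1 / 4) ^ (∑ i ∈ s, t i) :=
      Real.rpow_le_rpow_of_exponent_ge (by norm_num) (by norm_num) hsum
    _ = ∏ i ∈ s, (1 / 4 : ℝ) ^ t i := Real.rpow_sum_of_pos (by norm_num) _ _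
    _ ≤ ∏ i ∈ s, (1 - t i) := prod_le_prod (fun _ _ ↦ by positivity)
      fun i hi ↦ Real.quarter_rpow_le_one_sub (ht i hi).1 (ht i hi).2

lemma one_sub_measure_eq_true_le {Ω : Type*} [MeasurableSpace Ω] (μ : Measure Ω)
    [IsProbabilityMeasure μ] (X : Ω → Bool) :
    1 - μ {ω | X ω = true} ≤ μ {ω | X ω = false} := by
  have h : Set.univ \ {ω | X ω = true} = {ω | X ω = false} := by ext; simp
  simpa [h] using le_measure_sdiff (μ := μ) (s₁ := Set.univ) (s₂ := {ω | X ω = true})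

lemma ProbabilityTheory.iIndepFun.measure_eq_true_and_forall_eq_false {V Ω : Type*}
    [MeasurableSpace Ω] {μ : Measure Ω} {X : V → Ω → Bool} (hindep : iIndepFun X μ)
    {v : V} {N : Finset V} (hN : v ∉ N) :
    μ {ω | X v ω = true ∧ ∀ u ∈ N, X u ω = false} =
      μ {ω | X v ω = true} * ∏ u ∈ N, μ {ω | X u ω = false} := by
  classical
  set sets : V → Set Bool := fun u ↦ if u = v then {true} else {false}
  have hne : ∀ u ∈ N, u ≠ v := fun u hu huv ↦ hN (huv ▸ hu)
  have hset : {ω | X v ω = true ∧ ∀ u ∈ N, X u ω = false} =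
      ⋂ u ∈ insert v N, X u ⁻¹' sets u := by
    ext ω
    simp only [Set.mem_ofPred_eq, Set.mem_iInter, mem_insert, forall_eq_or_imp, sets, if_pos,
      Set.mem_preimage, Set.mem_singleton_iff]
    refine and_congr Iff.rfl (forall₂_congr fun u hu ↦ ?_)
    rw [if_neg (hne u hu), Set.mem_singleton_iff]
  rw [hset, hindep.measure_inter_preimage_eq_mul _ (sets := sets) fun _ _ ↦ trivial,
    prod_insert hN]
  congr 1
  · simp only [sets, if_pos]; rfl
  · exact Finset.prod_congr rfl fun u hu ↦ by simp only [sets, if_neg (hne u hu)]; rfl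

theorem stmt_7_general {V : Type*}
    {Ω : Type*} [MeasurableSpace Ω] (μ : Measure Ω) [IsProbabilityMeasure μ]
    (v : V) (N : Finset V) (hN : v ∉ N)
    (p : V → ℝ) (hpv : p v = 1 / 2) (hp : ∀ u, 0 ≤ p u ∧ p u ≤ 1 / 2)
    (hsum : ∑ u ∈ N, p u < 1)
    (X : V → Ω → Bool)
    (hindep : iIndepFun X μ)
    (hbern : ∀ u, μ {ω | X u ω = true} = ENNReal.ofReal (p u)) :
    ENNReal.ofReal (1 / 8) ≤
      μ {ω | X v ω = true ∧ ∀ u ∈ N, X u ω = false} := by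
  have hfalse : ∀ u, ENNReal.ofReal (1 - p u) ≤ μ {ω | X u ω = false} := fun u ↦ by
    rw [ENNReal.ofReal_sub _ (hp u).1, ENNReal.ofReal_one, ← hbern u]
    exact one_sub_measure_eq_true_le μ (X u)
  have hprod : (1 / 4 : ℝ) ≤ ∏ u ∈ N, (1 - p u) :=
    N.quarter_le_prod_one_sub p (fun u _ ↦ hp u) hsum.le
  rw [hindep.measure_eq_true_and_forall_eq_false hN, hbern v, hpv]
  calc ENNReal.ofReal (1 / 8) = ENNReal.ofReal (1 / 2) * ENNReal.ofReal (1 / 4) := by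
        rw [← ENNReal.ofReal_mul (by norm_num)]; norm_num
    _ ≤ ENNReal.ofReal (1 / 2) * ∏ u ∈ N, ENNReal.ofReal (1 - p u) := by
        rw [← ENNReal.ofReal_prod_of_nonneg fun u _ ↦ by linarith [(hp u).2]]
        gcongr
    _ ≤ ENNReal.ofReal (1 / 2) * ∏ u ∈ N, μ {ω | X u ω = false} := by
        gcongr with u; exact hfalse u

/-- Type-1 golden round bound: if `p v = 1/2` and the sum of `p` over the
neighbors `N` of `v` is less than `1`, then `v` marks itself while no neighbor
does with probability at least `1/8`. -/
theorem stmt_7 {V : Type*} [Fintype V] [DecidableEq V]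
    {Ω : Type*} [MeasurableSpace Ω] (μ : Measure Ω) [IsProbabilityMeasure μ]
    (v : V) (N : Finset V) (hN : v ∉ N)
    (p : V → ℝ) (hpv : p v = 1 / 2) (hp : ∀ u, 0 ≤ p u ∧ p u ≤ 1 / 2)
    (hsum : ∑ u ∈ N, p u < 1)
    (X : V → Ω → Bool) (hXmeas : ∀ u, Measurable (X u))
    (hindep : iIndepFun X μ)
    (hbern : ∀ u, μ {ω | X u ω = true} = ENNReal.ofReal (p u)) :
    ENNReal.ofReal (1 / 8) ≤
      μ {ω | X v ω = true ∧ ∀ u ∈ N, X u ω = false} :=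
  stmt_7_general μ v N hN p hpv hp hsum X hindep hbern
end

section
/- There exist constants K ≥ 1 and c₀ ≥ 1 such that the following holds for every real c ≥ c₀, every integer n ≥ 2, and every natural number T with T ≥ K·c·log₂ n. Suppose p : ℕ → ℝ, d : ℕ → ℝ, and o : ℕ → Bool satisfy: p(0) = 1/2; for every t, p(t+1) = p(t)/2 if o(t) = true, and p(t+1) = min(2·p(t), 1/2) if o(t) = false; for every t, if d(t) ≤ 0.01 then o(t) = false; for every t, 0 ≤ d(t+1) ≤ 2·d(t); and 0 ≤ d(0) ≤ n/2. Call a round t < T type-1 golden if d(t) < 1 and p(t) = 1/2, and type-2 golden if d(t) ≥ 1/200 and d(t+1) > (2/3)·d(t). Then either at least c·log₂ n of the rounds t ∈ {0, …, T−1} are type-1 golden, or at least c·log₂ n of them are type-2 golden. -/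
open Finset Real Classical

/-! Write `p t = 2^-(ℓ t + 1)`. The exponent `ℓ` goes up by one in every round with `o t = true`
and down by one in every other round with `p t ≠ 1/2`, so such doubling rounds are at most as
many as halving rounds, and halving rounds have `d t > 1/100`. A round with `d t > 1/100` is
type-2 golden or shrinks `d` by the factor `2/3`; the potential `log_{3/2} (150 d)` (cut to `0`
at or below `1/100`) drops by one in each such shrinking round, rises by at most `3` in a type-2
golden round, never rises otherwise, and starts below `16 log₂ n`. A round with `d t ≤ 1/100` is
type-1 golden or a doubling round. Altogether `T ≤ G₁ + 8 G₂ + 32 log₂ n`, so `K = 41` works. -/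

theorem card_filter_le_card_filter_add_card_filter {ι : Type*} {s : Finset ι}
    {P Q R : ι → Prop} [DecidablePred P] [DecidablePred Q] [DecidablePred R]
    (h : ∀ i ∈ s, P i → Q i ∨ R i) :
    #(s.filter P) ≤ #(s.filter Q) + #(s.filter R) :=
  calc #(s.filter P) ≤ #(s.filter Q ∪ s.filter R) :=
        card_le_card fun i hi => by
          simp only [mem_filter, mem_union] at hi ⊢
          grind
    _ ≤ _ := card_union_le _ _

theorem card_filter_range_le_of_potential {ψ : ℕ → ℝ} {β : ℝ} {A B : ℕ → Prop}
    [DecidablePred A] [DecidablePred B] (hψ : ∀ t, 0 ≤ ψ t)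
    (hstep : ∀ t, ψ (t + 1) + (if A t then 1 else 0) ≤ ψ t + if B t then β else 0)
    (T : ℕ) : (#((range T).filter A) : ℝ) ≤ ψ 0 + β * #((range T).filter B) := by
  have hsum := sum_le_sum fun t (_ : t ∈ range T) => hstep t
  have htel := sum_range_succ' ψ T
  rw [sum_range_succ] at htel
  simp only [sum_add_distrib, sum_ite, sum_const, nsmul_eq_mul, mul_one] at hsum
  linarith [hψ T]

/-- The exponent `ℓ` with `p = 2^-(ℓ + 1)`; truncated subtraction models the cap
`min (2 * p) (1 / 2)`. -/
def level (o : ℕ → Bool) : ℕ → ℕ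
  | 0 => 0
  | t + 1 => if o t then level o t + 1 else level o t - 1

theorem eq_half_pow_level {p : ℕ → ℝ} {o : ℕ → Bool} (hp0 : p 0 = 1 / 2)
    (hot : ∀ t, o t = true → p (t + 1) = p t / 2)
    (hof : ∀ t, o t = false → p (t + 1) = min (2 * p t) (1 / 2)) (t : ℕ) :
    p t = (1 / 2) ^ (level o t + 1) := by
  induction t with
  | zero => simpa [level] using hp0
  | succ t ih =>
    cases ho : o t with
    | true => rw [hot t ho, ih, level, if_pos ho, pow_succ _ (_ + 1)]; ring
    | false =>
      rw [hof t ho, ih, level, if_neg (by simp [ho])]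
      rcases level o t with _ | m
      · norm_num
      · rw [Nat.add_sub_cancel, show 2 * (1 / 2 : ℝ) ^ (m + 1 + 1) = (1 / 2) ^ (m + 1) by ring]
        exact min_eq_left (pow_le_of_le_one (by norm_num) (by norm_num) m.succ_ne_zero)

theorem level_succ_add_le {p : ℕ → ℝ} {o : ℕ → Bool} (hp0 : p 0 = 1 / 2)
    (hot : ∀ t, o t = true → p (t + 1) = p t / 2)
    (hof : ∀ t, o t = false → p (t + 1) = min (2 * p t) (1 / 2)) (t : ℕ) :
    (level o (t + 1) : ℝ) + (if o t = false ∧ p t ≠ 1 / 2 then 1 else 0) ≤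
      level o t + if o t = true then 1 else 0 := by
  cases ho : o t with
  | true => simp [level, ho]
  | false =>
    have hsucc : level o (t + 1) = level o t - 1 := by simp [level, ho]
    by_cases hp : p t = 1 / 2
    · simp [hsucc, hp]
    · have hpos : 1 ≤ level o t := Nat.one_le_iff_ne_zero.2 fun h0 => hp (by
        rw [eq_half_pow_level hp0 hot hof, h0, zero_add, pow_one])
      rw [if_pos ⟨rfl, hp⟩, if_neg Bool.false_ne_true, hsucc, Nat.cast_sub hpos]
      simp

theorem card_filter_doubling_le_card_filter_halving {p : ℕ → ℝ} {o : ℕ → Bool}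
    (hp0 : p 0 = 1 / 2) (hot : ∀ t, o t = true → p (t + 1) = p t / 2)
    (hof : ∀ t, o t = false → p (t + 1) = min (2 * p t) (1 / 2)) (T : ℕ) :
    #((range T).filter fun t => o t = false ∧ p t ≠ 1 / 2) ≤
      #((range T).filter fun t => o t = true) := by
  have h := card_filter_range_le_of_potential (fun t => Nat.cast_nonneg (level o t))
    (level_succ_add_le hp0 hot hof) T
  simp only [level, Nat.cast_zero, zero_add, one_mul] at h
  exact_mod_cast h

/-- The jump from `0` to `1` at `1/100` lets a shrinking round starting above `1/100` pay a full
unit, while any round starting below `1/200` ends at potential `0`. -/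
noncomputable def shrinkPotential (x : ℝ) : ℝ :=
  if 1 / 100 < x then logb (3 / 2) (150 * x) else 0

theorem one_le_logb {b x : ℝ} (hb : 1 < b) (hx : b ≤ x) : 1 ≤ logb b x := by
  rw [← logb_self_eq_one hb]
  exact logb_le_logb_of_le hb (by linarith) hx

theorem logb_three_halves_le_three {x : ℝ} (hx₀ : 0 < x) (hx : x ≤ 3) :
    logb (3 / 2) x ≤ 3 := by
  rw [logb_le_iff_le_rpow (by norm_num) hx₀]
  norm_num
  linarith

theorem shrinkPotential_nonneg (x : ℝ) : 0 ≤ shrinkPotential x := by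
  unfold shrinkPotential
  split_ifs with hx
  · exact (one_le_logb (by norm_num) (by linarith)).trans' zero_le_one
  · exact le_rfl

theorem shrinkPotential_of_le {x : ℝ} (hx : x ≤ 1 / 100) : shrinkPotential x = 0 :=
  if_neg hx.not_gt

theorem shrinkPotential_of_lt {x : ℝ} (hx : 1 / 100 < x) :
    shrinkPotential x = logb (3 / 2) (150 * x) :=
  if_pos hx

theorem shrinkPotential_add_one_le {x y : ℝ} (hx : 1 / 100 < x) (hy : y ≤ 2 / 3 * x) :
    shrinkPotential y + 1 ≤ shrinkPotential x := by
  rw [shrinkPotential_of_lt hx]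
  by_cases hy' : 1 / 100 < y
  · rw [shrinkPotential_of_lt hy', ← logb_self_eq_one (b := 3 / 2) (by norm_num),
      ← logb_mul (by positivity) (by norm_num)]
    exact logb_le_logb_of_le (by norm_num) (by positivity) (by linarith)
  · rw [shrinkPotential_of_le (not_lt.1 hy'), zero_add]
    exact one_le_logb (by norm_num) (by linarith)

theorem shrinkPotential_le_add_three {x y : ℝ} (hy : y ≤ 2 * x) :
    shrinkPotential y ≤ shrinkPotential x + 3 := by
  by_cases hy' : 1 / 100 < y
  · rw [shrinkPotential_of_lt hy']
    by_cases hx : 1 / 100 < x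
    · rw [shrinkPotential_of_lt hx]
      calc logb (3 / 2) (150 * y) ≤ logb (3 / 2) (2 * (150 * x)) :=
            logb_le_logb_of_le (by norm_num) (by positivity) (by linarith)
        _ = logb (3 / 2) 2 + logb (3 / 2) (150 * x) := logb_mul (by norm_num) (by positivity)
        _ ≤ _ := by linarith [logb_three_halves_le_three two_pos (by norm_num)]
    · rw [shrinkPotential_of_le (not_lt.1 hx), zero_add]
      exact logb_three_halves_le_three (by positivity) (by linarith)
  · rw [shrinkPotential_of_le (not_lt.1 hy')]
    linarith [shrinkPotential_nonneg x]

theorem shrinkPotential_step {x y : ℝ} (hy : y ≤ 2 * x) :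
    shrinkPotential y + (if 1 / 100 < x ∧ y ≤ 2 / 3 * x then 1 else 0) ≤
      shrinkPotential x + if 1 / 200 ≤ x ∧ 2 / 3 * x < y then 3 else 0 := by
  split_ifs with hshrink hgolden hgolden
  · linarith [hshrink.2, hgolden.2]
  · linarith [shrinkPotential_add_one_le hshrink.1 hshrink.2]
  · linarith [shrinkPotential_le_add_three hy]
  · rw [shrinkPotential_of_le (by grind), add_zero, add_zero]
    exact shrinkPotential_nonneg x

theorem logb_three_halves_le_two_mul_logb_two {y : ℝ} (hy : 1 ≤ y) :
    logb (3 / 2) y ≤ 2 * logb 2 y := by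
  have hlog : log 2 / 2 ≤ log (3 / 2) := by
    rw [div_le_iff₀ two_pos, mul_comm]
    calc log 2 ≤ log ((3 / 2) ^ 2) := log_le_log two_pos (by norm_num)
      _ = 2 * log (3 / 2) := by rw [log_pow]; norm_num
  calc logb (3 / 2) y = log y / log (3 / 2) := rfl
    _ ≤ log y / (log 2 / 2) :=
      div_le_div_of_nonneg_left (log_nonneg hy) (by positivity) hlog
    _ = 2 * logb 2 y := by rw [logb]; ring

theorem shrinkPotential_le_logb {x n : ℝ} (hn : 2 ≤ n) (hx : x ≤ n / 2) :
    shrinkPotential x ≤ 16 * logb 2 n := by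
  have hlog := one_le_logb one_lt_two hn
  by_cases hx' : 1 / 100 < x
  · have h75 : logb 2 75 ≤ 7 := by
      rw [logb_le_iff_le_rpow one_lt_two (by norm_num)]
      norm_num
    calc shrinkPotential x = logb (3 / 2) (150 * x) := shrinkPotential_of_lt hx'
      _ ≤ logb (3 / 2) (75 * n) := logb_le_logb_of_le (by norm_num) (by positivity) (by linarith)
      _ ≤ 2 * logb 2 (75 * n) := logb_three_halves_le_two_mul_logb_two (by linarith)
      _ = 2 * (logb 2 75 + logb 2 n) := by rw [logb_mul (by norm_num) (by positivity)]
      _ ≤ 16 * logb 2 n := by linarith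
  · rw [shrinkPotential_of_le (not_lt.1 hx')]
    linarith

theorem card_filter_shrink_le {d : ℕ → ℝ} (hd : ∀ t, d (t + 1) ≤ 2 * d t) (T : ℕ) :
    (#((range T).filter fun t => 1 / 100 < d t ∧ d (t + 1) ≤ 2 / 3 * d t) : ℝ) ≤
      shrinkPotential (d 0) +
        3 * #((range T).filter fun t => 1 / 200 ≤ d t ∧ 2 / 3 * d t < d (t + 1)) :=
  card_filter_range_le_of_potential (fun _ => shrinkPotential_nonneg _)
    (fun t => shrinkPotential_step (hd t)) T

theorem golden_or_shrink {x y : ℝ} (hx : 1 / 100 < x) :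
    (1 / 200 ≤ x ∧ 2 / 3 * x < y) ∨ (1 / 100 < x ∧ y ≤ 2 / 3 * x) :=
  (lt_or_ge (2 / 3 * x) y).imp (fun h => ⟨by linarith, h⟩) (fun h => ⟨hx, h⟩)

theorem le_card_filter_golden_add_card_filter_shrink {p d : ℕ → ℝ} {o : ℕ → Bool}
    (hp0 : p 0 = 1 / 2) (hot : ∀ t, o t = true → p (t + 1) = p t / 2)
    (hof : ∀ t, o t = false → p (t + 1) = min (2 * p t) (1 / 2))
    (hdo : ∀ t, d t ≤ 0.01 → o t = false) (T : ℕ) :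
    T ≤ #((range T).filter fun t => d t < 1 ∧ p t = 1 / 2) +
      2 * #((range T).filter fun t => 1 / 200 ≤ d t ∧ 2 / 3 * d t < d (t + 1)) +
      2 * #((range T).filter fun t => 1 / 100 < d t ∧ d (t + 1) ≤ 2 / 3 * d t) := by
  have hlow : ∀ t, d t ≤ 1 / 100 → o t = false := fun t ht => hdo t (by norm_num; linarith)
  have hhigh := card_filter_le_card_filter_add_card_filter (s := range T)
    (P := fun t => 1 / 100 < d t) fun t _ ht => golden_or_shrink (y := d (t + 1)) ht
  have hrest := card_filter_le_card_filter_add_card_filter (s := range T)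
    (P := fun t => ¬ 1 / 100 < d t) (Q := fun t => d t < 1 ∧ p t = 1 / 2)
    (R := fun t => o t = false ∧ p t ≠ 1 / 2) fun t _ ht => by
      by_cases hp : p t = 1 / 2
      · exact Or.inl ⟨by linarith, hp⟩
      · exact Or.inr ⟨hlow t (not_lt.1 ht), hp⟩
  have hhalving : #((range T).filter fun t => o t = true) ≤
      #((range T).filter fun t => 1 / 100 < d t) :=
    card_le_card <| monotone_filter_right _ fun t _ ho => by
      by_contra h
      simp [hlow t (not_lt.1 h)] at ho
  have hsplit := card_filter_add_card_filter_not (s := range T) fun t => 1 / 100 < d t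
  have hdoubling := card_filter_doubling_le_card_filter_halving hp0 hot hof T
  rw [card_range] at hsplit
  omega

/-- Golden-round counting lemma (Lemma `lem:manygolden` abstraction): in a run
of `T ≥ K·c·log₂ n` rounds of the desire-level process, either at least
`c·log₂ n` rounds are type-1 golden or at least `c·log₂ n` are type-2 golden. -/
theorem stmt_9 :
    ∃ K c₀ : ℝ, 1 ≤ K ∧ 1 ≤ c₀ ∧
      ∀ (c : ℝ), c₀ ≤ c → ∀ (n : ℕ), 2 ≤ n → ∀ (T : ℕ),
        K * c * Real.logb 2 n ≤ (T : ℝ) →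
        ∀ (p d : ℕ → ℝ) (o : ℕ → Bool),
          p 0 = 1 / 2 →
          (∀ t, o t = true → p (t + 1) = p t / 2) →
          (∀ t, o t = false → p (t + 1) = min (2 * p t) (1 / 2)) →
          (∀ t, d t ≤ 0.01 → o t = false) →
          (∀ t, 0 ≤ d (t + 1) ∧ d (t + 1) ≤ 2 * d t) →
          0 ≤ d 0 → d 0 ≤ (n : ℝ) / 2 →
          (c * Real.logb 2 n ≤
              (((Finset.range T).filter (fun t => d t < 1 ∧ p t = 1 / 2)).card : ℝ) ∨
           c * Real.logb 2 n ≤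
              (((Finset.range T).filter
                (fun t => 1 / 200 ≤ d t ∧ (2 / 3) * d t < d (t + 1))).card : ℝ)) := by
  refine ⟨41, 1, by norm_num, le_rfl, fun c hc n hn T hT p d o hp0 hot hof hdo hd _ hdn => ?_⟩
  have hn' : (2 : ℝ) ≤ n := by exact_mod_cast hn
  have hlog := one_le_logb one_lt_two hn'
  have hcount := Nat.cast_le (α := ℝ) |>.2 <|
    le_card_filter_golden_add_card_filter_shrink hp0 hot hof hdo T
  push_cast at hcount
  have hshrink := card_filter_shrink_le (fun t => (hd t).2) T
  have hpot := shrinkPotential_le_logb hn' hdn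
  have hL : logb 2 n ≤ c * logb 2 n := le_mul_of_one_le_left (by linarith) hc
  by_contra! h
  linarith [h.1, h.2]
end

section
/- Let P be a finite set of points in the Euclidean plane ℝ², and let G be the unit disk graph on P, i.e., the simple graph with vertex set P in which distinct points u, w are adjacent if and only if their Euclidean distance is at most 1. Let v ∈ P, let d be a natural number, and let S ⊆ P be an independent set of G all of whose elements are at graph distance at most d from v in G. Then |S| ≤ (2d + 1)². -/
open Finset

private lemma walk_dist_le {P : Finset (EuclideanSpace ℝ (Fin 2))}
    {G : SimpleGraph {x // x ∈ P}}
    (hG : ∀ u w : {x // x ∈ P}, G.Adj u w →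
      dist (u : EuclideanSpace ℝ (Fin 2)) (w : EuclideanSpace ℝ (Fin 2)) ≤ 1)
    {a b : {x // x ∈ P}} (p : G.Walk a b) :
    dist (a : EuclideanSpace ℝ (Fin 2)) (b : EuclideanSpace ℝ (Fin 2)) ≤ p.length := by
  induction p with
  | nil => simp
  | cons h p ih =>
    calc dist _ _ ≤ dist _ _ + dist _ _ := dist_triangle _ _ _
    _ ≤ 1 + p.length := add_le_add (hG _ _ h) ih
    _ = _ := by push_cast [SimpleGraph.Walk.length_cons]; ring

/-- Growth-boundedness of unit disk graphs: any independent set whose elements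
are within graph distance `d` of a vertex `v` has size at most `(2d+1)²`. -/
theorem stmt_10 (P : Finset (EuclideanSpace ℝ (Fin 2)))
    (G : SimpleGraph {x // x ∈ P})
    (hG : ∀ u w : {x // x ∈ P}, G.Adj u w ↔
      u ≠ w ∧ dist (u : EuclideanSpace ℝ (Fin 2)) (w : EuclideanSpace ℝ (Fin 2)) ≤ 1)
    (v : {x // x ∈ P}) (d : ℕ) (S : Finset {x // x ∈ P})
    (hSind : ∀ u ∈ S, ∀ w ∈ S, u ≠ w → ¬ G.Adj u w)
    (hSd : ∀ u ∈ S, G.Reachable v u ∧ G.dist v u ≤ d) :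
    S.card ≤ (2 * d + 1) ^ 2 := by
  classical
  -- each point of S is within Euclidean distance d of v
  have hdist : ∀ u ∈ S, dist (u : EuclideanSpace ℝ (Fin 2)) (v : EuclideanSpace ℝ (Fin 2)) ≤ d := by
    intro u hu
    obtain ⟨hreach, hle⟩ := hSd u hu
    obtain ⟨p, hp⟩ := hreach.exists_walk_length_eq_dist
    have := walk_dist_le (fun a b hab => ((hG a b).1 hab).2) p
    rw [hp] at this
    rw [dist_comm]
    exact this.trans (by exact_mod_cast hle)
  -- pairwise distances in S exceed 1
  have hsep : ∀ u ∈ S, ∀ w ∈ S, u ≠ w →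
      1 < dist (u : EuclideanSpace ℝ (Fin 2)) (w : EuclideanSpace ℝ (Fin 2)) := by
    intro u hu w hw huw
    by_contra h
    exact hSind u hu w hw huw ((hG u w).2 ⟨huw, le_of_not_gt h⟩)
  -- disjoint balls
  have hdisj : (S : Set {x // x ∈ P}).PairwiseDisjoint
      (fun u => Metric.ball (u : EuclideanSpace ℝ (Fin 2)) (1/2)) := by
    intro u hu w hw huw
    exact Metric.ball_disjoint_ball (by linarith [hsep u hu w hw huw])
  have hsub : (⋃ u ∈ S, Metric.ball (u : EuclideanSpace ℝ (Fin 2)) (1/2)) ⊆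
      Metric.closedBall (v : EuclideanSpace ℝ (Fin 2)) (d + 1/2) := by
    intro x hx
    simp only [Set.mem_iUnion] at hx
    obtain ⟨u, hu, hx⟩ := hx
    rw [Metric.mem_ball] at hx
    rw [Metric.mem_closedBall]
    calc dist x _ ≤ dist x (u : EuclideanSpace ℝ (Fin 2)) + dist _ _ := dist_triangle _ _ _
    _ ≤ 1/2 + d := by linarith [hdist u hu]
    _ = d + 1/2 := by ring
  have hvol := MeasureTheory.measure_mono hsub (μ := MeasureTheory.volume)
  rw [MeasureTheory.measure_biUnion_finset hdisj
    (fun u _ => measurableSet_ball)] at hvol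
  have hι : Nonempty (Fin 2) := ⟨0⟩
  simp only [EuclideanSpace.volume_ball, EuclideanSpace.volume_closedBall,
    Fintype.card_fin, Finset.sum_const, nsmul_eq_mul] at hvol
  -- convert to a real inequality
  set c : ℝ := Real.sqrt Real.pi ^ 2 / Real.Gamma ((2:ℕ) / 2 + 1) with hcdef
  have hc : (0:ℝ) < c := by
    apply div_pos
    · positivity
    · exact Real.Gamma_pos_of_pos (by norm_num)
  have h1 := ENNReal.toReal_mono
    (ENNReal.mul_ne_top (by simp) ENNReal.ofReal_ne_top) hvol
  rw [ENNReal.toReal_mul, ENNReal.toReal_mul, ENNReal.toReal_mul, ENNReal.toReal_pow,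
    ENNReal.toReal_pow, ENNReal.toReal_ofReal (by norm_num : (0:ℝ) ≤ 1/2),
    ENNReal.toReal_ofReal (by positivity : (0:ℝ) ≤ (d:ℝ) + 1/2),
    ENNReal.toReal_ofReal hc.le, ENNReal.toReal_natCast] at h1
  have h2 : (S.card : ℝ) * ((1/2)^2) ≤ ((d:ℝ) + 1/2)^2 :=
    le_of_mul_le_mul_right (by linarith [h1]) hc
  have hcard : (S.card : ℝ) ≤ ((2*d+1 : ℕ) : ℝ)^2 := by push_cast; nlinarith
  have : ((2*d+1 : ℕ):ℝ)^2 = (((2*d+1)^2 : ℕ) : ℝ) := by push_cast; ring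
  rw [this] at hcard
  exact_mod_cast hcard
end

section
/- Let 0 < r ≤ R be real numbers, let P be a finite set of points in the Euclidean plane ℝ², and let G be a simple graph with vertex set P such that any two distinct points at Euclidean distance less than r are adjacent and any two points at Euclidean distance greater than R are non-adjacent. Let v ∈ P, let d ≥ 1 be a natural number, and let S ⊆ P be an independent set of G all of whose elements are at graph distance at most d from v in G. Then |S| ≤ (2dR/r + 1)². -/
/-!
Two points of `S` are non-adjacent, so they are at Euclidean distance at least `r`, and every point
of `S` is joined to `v` by a walk of at most `d` edges of length at most `R`, so it lies within `dR`
of `v`. The disjoint balls of radius `r/2` around the points of `S` thus fit in the ball of radius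
`dR + r/2` around `v`, and comparing areas gives `|S| (r/2)² ≤ (dR + r/2)²`.
-/

open MeasureTheory Metric Module

section GraphDistance

variable {V X : Type*} [PseudoMetricSpace X] {G : SimpleGraph V} {f : V → X} {R : ℝ}

theorem dist_le_walk_length_mul (hadj : ∀ u w, G.Adj u w → dist (f u) (f w) ≤ R)
    {a b : V} (p : G.Walk a b) : dist (f a) (f b) ≤ p.length * R := by
  induction p with
  | nil => simp
  | @cons u w c huw p ih =>
    calc dist (f u) (f c) ≤ dist (f u) (f w) + dist (f w) (f c) := dist_triangle _ _ _
      _ ≤ R + p.length * R := add_le_add (hadj u w huw) ih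
      _ = (p.cons huw).length * R := by push_cast [SimpleGraph.Walk.length_cons]; ring

theorem dist_le_graph_dist_mul (hadj : ∀ u w, G.Adj u w → dist (f u) (f w) ≤ R)
    {a b : V} (h : G.Reachable a b) : dist (f a) (f b) ≤ G.dist a b * R := by
  obtain ⟨p, hp⟩ := h.exists_walk_length_eq_dist
  simpa only [hp] using dist_le_walk_length_mul hadj p

end GraphDistance

theorem Finset.card_mul_pow_le_of_separated {E ι : Type*} [NormedAddCommGroup E]
    [NormedSpace ℝ E] [MeasurableSpace E] [BorelSpace E] [FiniteDimensional ℝ E] [Nontrivial E]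
    (μ : Measure E) [μ.IsAddHaarMeasure] {r ρ : ℝ} (hr : 0 < r) (hρ : 0 ≤ ρ)
    (S : Finset ι) (f : ι → E) (c : E)
    (hsep : ∀ i ∈ S, ∀ j ∈ S, i ≠ j → r ≤ dist (f i) (f j))
    (hS : ∀ i ∈ S, dist (f i) c ≤ ρ) :
    (S.card : ℝ) * (r / 2) ^ finrank ℝ E ≤ (ρ + r / 2) ^ finrank ℝ E := by
  have hdisj : (S : Set ι).PairwiseDisjoint fun i => ball (f i) (r / 2) := fun i hi j hj hij =>
    ball_disjoint_ball (by linarith [hsep i hi j hj hij])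
  have hsub : ⋃ i ∈ S, ball (f i) (r / 2) ⊆ ball c (ρ + r / 2) := by
    simp only [Set.iUnion_subset_iff]
    exact fun i hi => ball_subset_ball' (by linarith [hS i hi])
  have hvol : ∑ i ∈ S, μ (ball (f i) (r / 2)) ≤ μ (ball c (ρ + r / 2)) := by
    rw [← measure_biUnion_finset hdisj fun i _ => measurableSet_ball]
    exact measure_mono hsub
  have hunit_pos : μ (ball (0 : E) 1) ≠ 0 := (measure_ball_pos μ 0 one_pos).ne'
  have hunit_fin : μ (ball (0 : E) 1) ≠ ⊤ := measure_ball_lt_top.ne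
  simp only [μ.addHaar_ball _ (by linarith : 0 ≤ r / 2),
    μ.addHaar_ball _ (by linarith : 0 ≤ ρ + r / 2),
    Finset.sum_const, nsmul_eq_mul, ← mul_assoc] at hvol
  rw [ENNReal.mul_le_mul_iff_left hunit_pos hunit_fin, ← ENNReal.ofReal_natCast,
    ← ENNReal.ofReal_mul (by positivity)] at hvol
  exact (ENNReal.ofReal_le_ofReal_iff (by positivity)).1 hvol

theorem stmt_11_general (r R : ℝ) (hr : 0 < r) (hrR : r ≤ R)
    (P : Finset (EuclideanSpace ℝ (Fin 2)))
    (G : SimpleGraph {x // x ∈ P})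
    (hGnear : ∀ u w : {x // x ∈ P}, u ≠ w →
      dist (u : EuclideanSpace ℝ (Fin 2)) (w : EuclideanSpace ℝ (Fin 2)) < r → G.Adj u w)
    (hGfar : ∀ u w : {x // x ∈ P},
      R < dist (u : EuclideanSpace ℝ (Fin 2)) (w : EuclideanSpace ℝ (Fin 2)) → ¬ G.Adj u w)
    (v : {x // x ∈ P}) (d : ℕ) (S : Finset {x // x ∈ P})
    (hSind : ∀ u ∈ S, ∀ w ∈ S, u ≠ w → ¬ G.Adj u w)
    (hSd : ∀ u ∈ S, G.Reachable v u ∧ G.dist v u ≤ d) :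
    (S.card : ℝ) ≤ (2 * d * R / r + 1) ^ 2 := by
  have hR : 0 ≤ R := hr.le.trans hrR
  have hsep : ∀ u ∈ S, ∀ w ∈ S, u ≠ w → r ≤ dist (u : EuclideanSpace ℝ (Fin 2)) w :=
    fun u hu w hw huw => not_lt.1 fun hlt => hSind u hu w hw huw (hGnear u w huw hlt)
  have hadj : ∀ u w, G.Adj u w → dist (u : EuclideanSpace ℝ (Fin 2)) w ≤ R :=
    fun u w huw => not_lt.1 fun hlt => hGfar u w hlt huw
  have hnear : ∀ u ∈ S, dist (u : EuclideanSpace ℝ (Fin 2)) v ≤ d * R := by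
    intro u hu
    obtain ⟨hreach, hdist⟩ := hSd u hu
    rw [dist_comm]
    calc dist (v : EuclideanSpace ℝ (Fin 2)) u ≤ G.dist v u * R :=
          dist_le_graph_dist_mul hadj hreach
      _ ≤ d * R := by gcongr
  have hpack := S.card_mul_pow_le_of_separated volume hr (by positivity) Subtype.val v hsep hnear
  rw [finrank_euclideanSpace_fin, ← le_div_iff₀ (by positivity)] at hpack
  calc (S.card : ℝ) ≤ (d * R + r / 2) ^ 2 / (r / 2) ^ 2 := hpack
    _ = (2 * d * R / r + 1) ^ 2 := by field_simp

/-- Growth-boundedness of quasi unit disk graphs with parameters `r ≤ R`: any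
independent set whose elements are within graph distance `d ≥ 1` of a vertex
`v` has size at most `(2dR/r + 1)²`. -/
theorem stmt_11 (r R : ℝ) (hr : 0 < r) (hrR : r ≤ R)
    (P : Finset (EuclideanSpace ℝ (Fin 2)))
    (G : SimpleGraph {x // x ∈ P})
    (hGnear : ∀ u w : {x // x ∈ P}, u ≠ w →
      dist (u : EuclideanSpace ℝ (Fin 2)) (w : EuclideanSpace ℝ (Fin 2)) < r → G.Adj u w)
    (hGfar : ∀ u w : {x // x ∈ P},
      R < dist (u : EuclideanSpace ℝ (Fin 2)) (w : EuclideanSpace ℝ (Fin 2)) → ¬ G.Adj u w)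
    (v : {x // x ∈ P}) (d : ℕ) (hd : 1 ≤ d) (S : Finset {x // x ∈ P})
    (hSind : ∀ u ∈ S, ∀ w ∈ S, u ≠ w → ¬ G.Adj u w)
    (hSd : ∀ u ∈ S, G.Reachable v u ∧ G.dist v u ≤ d) :
    (S.card : ℝ) ≤ (2 * d * R / r + 1) ^ 2 :=
  stmt_11_general r R hr hrR P G hGnear hGfar v d S hSind hSd
end

section
/- Let D ≥ 2 be a natural number and α ≥ 2 a real number, and set b := 2^{max(1, ⌈log₂((log₂ α)/(log₂ D))⌉ + 2)}. Let x : ℕ → ℝ satisfy x_i ≥ 0 for all i and x_i = 0 for all i > D, and suppose s_0 ≥ 1 and ∑_{i=0}^{D} x_i ≤ α. Then the number of natural numbers j with 0.01·log₂ D ≤ j ≤ 0.1·log₂ D for which S_{2^{−j}} > 1024 · b · 2^j is at most 0.02·log₂ D. -/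
open Finset Real Classical

/-!
With `B β = ∑ xᵢ e^{-iβ}`, Jensen's inequality for `exp` under the weights `xᵢ e^{-iβ} / B β`
gives `B β · e^{(β/2) S_β} ≤ B (β/2)`. So every `j` with `S_{2^{-j}} > 1024 b 2^j` multiplies
`B (2^{-j})` by at least `e^{512 b}` on passing to `j + 1`, while `B` only grows as `β` decreases.
Since `B 1 ≥ e^{-2} s₀ ≥ e^{-2}` and `B β ≤ ∑ xᵢ ≤ α`, the number `m` of such `j` satisfies
`512 b m ≤ ln α + 2 ≤ 3 log₂ α`, and `b ≥ 4 log₂ α / log₂ D` turns this into `m ≤ 3 log₂ D / 2048`.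
-/

noncomputable def expSum (x : ℕ → ℝ) (n : ℕ) (β : ℝ) : ℝ :=
  ∑ i ∈ range n, x i * exp (-(i : ℝ) * β)

noncomputable def expMomentSum (x : ℕ → ℝ) (n : ℕ) (β : ℝ) : ℝ :=
  ∑ i ∈ range n, (i : ℝ) * x i * exp (-(i : ℝ) * β)

section expSum

variable {x : ℕ → ℝ} {n : ℕ}

lemma expSum_nonneg (hx : ∀ i, 0 ≤ x i) (β : ℝ) : 0 ≤ expSum x n β :=
  sum_nonneg fun i _ => mul_nonneg (hx i) (exp_pos _).le

lemma expSum_antitone (hx : ∀ i, 0 ≤ x i) : Antitone (expSum x n) := by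
  intro β β' h
  refine sum_le_sum fun i _ => mul_le_mul_of_nonneg_left (exp_le_exp.2 ?_) (hx i)
  nlinarith [(Nat.cast_nonneg i : (0 : ℝ) ≤ i)]

lemma expSum_le_sum (hx : ∀ i, 0 ≤ x i) {β : ℝ} (hβ : 0 ≤ β) :
    expSum x n β ≤ ∑ i ∈ range n, x i :=
  calc expSum x n β ≤ expSum x n 0 := expSum_antitone hx hβ
    _ = ∑ i ∈ range n, x i := by simp [expSum]

lemma exp_mul_sum_le_expSum (hx : ∀ i, 0 ≤ x i) {k : ℕ} (hk : k < n) {β : ℝ} (hβ : 0 ≤ β) :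
    exp (-(k : ℝ) * β) * ∑ i ∈ range (k + 1), x i ≤ expSum x n β := by
  rw [mul_sum]
  calc ∑ i ∈ range (k + 1), exp (-(k : ℝ) * β) * x i
        ≤ ∑ i ∈ range (k + 1), x i * exp (-(i : ℝ) * β) := by
          refine sum_le_sum fun i hi => ?_
          rw [mul_comm]
          refine mul_le_mul_of_nonneg_left (exp_le_exp.2 ?_) (hx i)
          have hik : (i : ℝ) ≤ k := by exact_mod_cast Nat.lt_succ_iff.mp (mem_range.mp hi)
          nlinarith
    _ ≤ expSum x n β :=
        sum_le_sum_of_subset_of_nonneg (range_subset_range.2 hk) fun i _ _ =>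
          mul_nonneg (hx i) (exp_pos _).le

/-- Jensen's inequality for `exp` under the probability weights `x i * exp (-i β) / expSum x n β`,
whose mean of `i` is `expMomentSum x n β / expSum x n β`. -/
lemma expSum_mul_exp_le (hx : ∀ i, 0 ≤ x i) (β t : ℝ) :
    expSum x n β * exp (t * (expMomentSum x n β / expSum x n β)) ≤ expSum x n (β - t) := by
  rcases (expSum_nonneg hx β).eq_or_lt with hB | hB
  · rw [← hB, zero_mul]
    exact expSum_nonneg hx _
  set B := expSum x n β
  have hw0 : ∀ i ∈ range n, 0 ≤ x i * exp (-(i : ℝ) * β) / B := fun i _ =>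
    div_nonneg (mul_nonneg (hx i) (exp_pos _).le) hB.le
  have hw1 : ∑ i ∈ range n, x i * exp (-(i : ℝ) * β) / B = 1 := by
    rw [← sum_div]
    exact div_self hB.ne'
  have jensen := convexOn_exp.map_sum_le hw0 hw1 fun i _ => Set.mem_univ ((i : ℝ) * t)
  have hmean : ∑ i ∈ range n, (x i * exp (-(i : ℝ) * β) / B) • ((i : ℝ) * t) =
      t * (expMomentSum x n β / B) := by
    rw [expMomentSum, sum_div, mul_sum]
    exact sum_congr rfl fun i _ => by rw [smul_eq_mul]; ring
  have hshift : ∑ i ∈ range n, (x i * exp (-(i : ℝ) * β) / B) • exp ((i : ℝ) * t) =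
      expSum x n (β - t) / B := by
    rw [expSum, sum_div]
    refine sum_congr rfl fun i _ => ?_
    rw [smul_eq_mul, div_mul_eq_mul_div, mul_assoc, ← exp_add]
    ring_nf
  rw [hmean, hshift, le_div_iff₀ hB] at jensen
  linarith

lemma expSum_mul_exp_le_half (hx : ∀ i, 0 ≤ x i) {β c : ℝ}
    (h : 2 * c ≤ β * (expMomentSum x n β / expSum x n β)) :
    expSum x n β * exp c ≤ expSum x n (β / 2) :=
  calc expSum x n β * exp c
      ≤ expSum x n β * exp (β / 2 * (expMomentSum x n β / expSum x n β)) :=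
        mul_le_mul_of_nonneg_left (exp_le_exp.2 (by linarith)) (expSum_nonneg hx β)
    _ ≤ expSum x n (β - β / 2) := expSum_mul_exp_le hx β (β / 2)
    _ = expSum x n (β / 2) := by ring_nf

end expSum

lemma Monotone.mul_pow_card_le {g : ℕ → ℝ} (hg : Monotone g) {c : ℝ} (hc : 0 ≤ c) :
    ∀ {n : ℕ} {s : Finset ℕ}, (∀ j ∈ s, g j * c ≤ g (j + 1)) → s ⊆ range n →
      g 0 * c ^ s.card ≤ g n
  | 0, s, _, hs => by simp [subset_empty.1 (range_zero ▸ hs)]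
  | n + 1, s, hstep, hs => by
    rw [range_add_one, subset_insert_iff] at hs
    by_cases hn : n ∈ s
    · calc g 0 * c ^ s.card = g 0 * c ^ (s.erase n).card * c := by
            rw [← card_erase_add_one hn, pow_succ, mul_assoc]
        _ ≤ g n * c := mul_le_mul_of_nonneg_right
            (hg.mul_pow_card_le hc (fun j hj => hstep j (mem_of_mem_erase hj)) hs) hc
        _ ≤ g (n + 1) := hstep n hn
    · rw [erase_eq_of_notMem hn] at hs
      exact (hg.mul_pow_card_le hc hstep hs).trans (hg n.le_succ)

lemma exp_neg_two_mul_exp_pow_card_le {x : ℕ → ℝ} (hx : ∀ i, 0 ≤ x i) {n : ℕ} (hn : 3 ≤ n)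
    {α c : ℝ} (hs0 : 1 ≤ ∑ i ∈ range 3, x i) (hsum : ∑ i ∈ range n, x i ≤ α)
    {F : Finset ℕ} {N : ℕ} (hF : F ⊆ range N)
    (hbad : ∀ j ∈ F, 2 * c * 2 ^ j ≤ expMomentSum x n (2 ^ j)⁻¹ / expSum x n (2 ^ j)⁻¹) :
    exp (-2) * exp c ^ F.card ≤ α := by
  set g : ℕ → ℝ := fun j => expSum x n (2 ^ j)⁻¹
  have hg : Monotone g := Antitone.comp (g := expSum x n) (f := fun j : ℕ => ((2 : ℝ) ^ j)⁻¹)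
    (expSum_antitone hx) fun i j hij =>
    inv_anti₀ (by positivity) (pow_le_pow_right₀ one_le_two hij)
  have hstep : ∀ j ∈ F, g j * exp c ≤ g (j + 1) := fun j hj => by
    have h := expSum_mul_exp_le_half (c := c) hx (β := (2 ^ j)⁻¹) (n := n) (by
      rw [← div_eq_inv_mul, le_div_iff₀ (by positivity)]
      exact hbad j hj)
    have hhalf : ((2 : ℝ) ^ (j + 1))⁻¹ = (2 ^ j)⁻¹ / 2 := by
      rw [pow_succ, mul_inv, div_eq_mul_inv]
    simpa only [g, hhalf] using h
  have hg0 : exp (-2) ≤ g 0 := by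
    have h := exp_mul_sum_le_expSum hx (n := n) (k := 2) (by omega) (β := 1) zero_le_one
    rw [show -((2 : ℕ) : ℝ) * 1 = -2 by norm_num] at h
    have := mul_le_mul_of_nonneg_left hs0 (exp_pos (-2)).le
    simp only [g, pow_zero, inv_one]
    linarith
  have hgN : g N ≤ α := (expSum_le_sum hx (by positivity)).trans hsum
  calc exp (-2) * exp c ^ F.card ≤ g 0 * exp c ^ F.card := by gcongr
    _ ≤ g N := hg.mul_pow_card_le (exp_pos c).le hstep hF
    _ ≤ α := hgN

lemma four_mul_le_two_zpow_max_ceil_logb {y : ℝ} (hy : 0 < y) :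
    4 * y ≤ (2 : ℝ) ^ (max 1 (⌈logb 2 y⌉ + 2) : ℤ) :=
  calc 4 * y = (2 : ℝ) ^ (logb 2 y + 2) := by
        rw [rpow_add two_pos, rpow_logb two_pos (by norm_num) hy]; norm_num; ring
    _ ≤ (2 : ℝ) ^ ((max 1 (⌈logb 2 y⌉ + 2) : ℤ) : ℝ) := by
        refine rpow_le_rpow_of_exponent_le one_le_two ?_
        push_cast
        exact le_max_of_le_right (by linarith [Int.le_ceil (logb 2 y)])
    _ = _ := rpow_intCast _ _

theorem stmt_14_general (D : ℕ) (hD : 2 ≤ D) (α : ℝ) (hα : 2 ≤ α)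
    (b : ℝ)
    (hb : b = (2 : ℝ) ^ (max 1 (⌈Real.logb 2 (Real.logb 2 α / Real.logb 2 D)⌉ + 2) : ℤ))
    (x : ℕ → ℝ) (hx : ∀ i, 0 ≤ x i)
    (hs0 : 1 ≤ ∑ i ∈ Finset.range (2 ^ (0 + 1) + 1), x i)
    (hsum : ∑ i ∈ Finset.range (D + 1), x i ≤ α) :
    (((Finset.range (D + 1)).filter (fun j : ℕ =>
        0.01 * Real.logb 2 D ≤ (j : ℝ) ∧ (j : ℝ) ≤ 0.1 * Real.logb 2 D ∧
        1024 * b * 2 ^ j <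
          (∑ i ∈ Finset.range (D + 1),
              (i : ℝ) * x i * Real.exp (-(i : ℝ) * 2 ^ (-(j : ℝ)))) /
            (∑ i ∈ Finset.range (D + 1),
              x i * Real.exp (-(i : ℝ) * 2 ^ (-(j : ℝ)))))).card : ℝ)
      ≤ 0.02 * Real.logb 2 D := by
  set L := logb 2 (D : ℝ)
  set A := logb 2 α
  have hL : 1 ≤ L := (le_logb_iff_rpow_le one_lt_two (by positivity)).2 (by simpa using hD)
  have hA : 1 ≤ A := (le_logb_iff_rpow_le one_lt_two (by positivity)).2 (by simpa using hα)
  have hbL : 4 * A ≤ b * L := by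
    have h := four_mul_le_two_zpow_max_ceil_logb (y := A / L) (by positivity)
    rw [← hb, mul_div_assoc', div_le_iff₀ (by positivity)] at h
    exact h
  have hb0 : 0 < b := hb ▸ by positivity
  refine (?_ : ∀ m : ℕ, exp (-2) * exp (512 * b) ^ m ≤ α → (m : ℝ) ≤ 0.02 * L) _
    (exp_neg_two_mul_exp_pow_card_le hx (by omega) (by simpa using hs0) hsum
      (filter_subset _ _) fun j hj => ?_)
  · intro m hgrowth
    have hlog : 512 * b * m - 2 ≤ log α := by
      rw [← exp_nat_mul, ← exp_add, ← le_log_iff_exp_le (by positivity)] at hgrowth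
      linarith
    have hlogα : log α ≤ A := by
      show log α ≤ log α / log 2
      rw [le_div_iff₀ (log_pos one_lt_two)]
      exact mul_le_of_le_one_right (log_nonneg (by linarith))
        (log_two_lt_d9.le.trans (by norm_num))
    have hbm : b * (2048 * m) ≤ b * (3 * L) := by linarith
    linarith [le_of_mul_le_mul_left hbm hb0]
  · have h := (mem_filter.1 hj).2.2.2
    simp only [rpow_neg two_pos.le, rpow_natCast] at h
    calc 2 * (512 * b) * 2 ^ j = 1024 * b * 2 ^ j := by ring
      _ ≤ _ := h.le

/-- Deterministic core of Theorem 2 (`thm:cprop`): the number of integers `j`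
with `0.01·log₂ D ≤ j ≤ 0.1·log₂ D` for which `S_{2^{-j}} > 1024·b·2^j` is at
most `0.02·log₂ D`, where `b = 2^(max(1, ⌈log₂(log₂ α / log₂ D)⌉ + 2))`. -/
theorem stmt_14 (D : ℕ) (hD : 2 ≤ D) (α : ℝ) (hα : 2 ≤ α)
    (b : ℝ)
    (hb : b = (2 : ℝ) ^ (max 1 (⌈Real.logb 2 (Real.logb 2 α / Real.logb 2 D)⌉ + 2) : ℤ))
    (x : ℕ → ℝ) (hx : ∀ i, 0 ≤ x i) (hxD : ∀ i, D < i → x i = 0)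
    (hs0 : 1 ≤ ∑ i ∈ Finset.range (2 ^ (0 + 1) + 1), x i)
    (hsum : ∑ i ∈ Finset.range (D + 1), x i ≤ α) :
    (((Finset.range (D + 1)).filter (fun j : ℕ =>
        0.01 * Real.logb 2 D ≤ (j : ℝ) ∧ (j : ℝ) ≤ 0.1 * Real.logb 2 D ∧
        1024 * b * 2 ^ j <
          (∑ i ∈ Finset.range (D + 1),
              (i : ℝ) * x i * Real.exp (-(i : ℝ) * 2 ^ (-(j : ℝ)))) /
            (∑ i ∈ Finset.range (D + 1),
              x i * Real.exp (-(i : ℝ) * 2 ^ (-(j : ℝ)))))).card : ℝ)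
      ≤ 0.02 * Real.logb 2 D :=
  stmt_14_general D hD α hα b hb x hx hs0 hsum
end
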